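/- arXiv:2403.18943 — 6 statements merged into one kernel-verified Lean document; each statement's English description precedes it below -/
import Mathlib

section
/- Let u1=(1−√5)/2, u2=(1+√5)/2, A=(√5−3)/(2√5), B=(√5+3)/(2√5), and for every integer k ≥ 1 set M_B(k) = 2·(A·(u1^{k+1}−u1)/(u1²−1) + B·(u2^{k+1}−u2)/(u2²−1)). Then M_B(1)=2, M_B(2)=4, M_B(k)=M_B(k−1)+M_B(k−2)+2 for all k ≥ 3, and consequently M_B(k) = 2·(F_{k+2} − 1) for all k ≥ 1, where (F_j) denotes the Fibonacci sequence with F_1=F_2=1. -/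
/-- `u₁ = (1 - √5)/2`. -/
noncomputable def u1 : ℝ := (1 - Real.sqrt 5) / 2

/-- `u₂ = (1 + √5)/2`. -/
noncomputable def u2 : ℝ := (1 + Real.sqrt 5) / 2

/-- `A = (√5 - 3)/(2√5)`. -/
noncomputable def A : ℝ := (Real.sqrt 5 - 3) / (2 * Real.sqrt 5)

/-- `B = (√5 + 3)/(2√5)`. -/
noncomputable def B : ℝ := (Real.sqrt 5 + 3) / (2 * Real.sqrt 5)

/-- The bipartite Moore bound `M_B(k)` for `(1,1,k)`-mixed graphs. -/
noncomputable def MB (k : ℕ) : ℝ :=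
  2 * (A * (u1 ^ (k + 1) - u1) / (u1 ^ 2 - 1) + B * (u2 ^ (k + 1) - u2) / (u2 ^ 2 - 1))

/-!
`u₁, u₂` are the conjugate `ψ` and the golden ratio `φ`, and `A = -ψ²/√5`, `B = φ²/√5`.
Since `u² - 1 = u` for both, each summand of `M_B(k)` collapses to `A (ψᵏ - 1)` resp.
`B (φᵏ - 1)`, so Binet's formula `F_{k+2} = (φ^{k+2} - ψ^{k+2})/√5` together with `A + B = 1`
gives `M_B(k) = 2 (F_{k+2} - 1)`; the values and the recurrence are then those of `F`.
-/

open Real goldenRatio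

theorem pow_succ_sub_self_div_sq_sub_one {K : Type*} [Field K] {u : K} (hu : u ^ 2 = u + 1)
    (k : ℕ) : (u ^ (k + 1) - u) / (u ^ 2 - 1) = u ^ k - 1 := by
  have hu0 : u ≠ 0 := by rintro rfl; norm_num at hu
  rw [hu, add_sub_cancel_right, pow_succ]
  field_simp

theorem u1_eq_goldenConj : u1 = ψ := rfl

theorem u2_eq_goldenRatio : u2 = φ := rfl

theorem A_eq_neg_goldenConj_sq_div_sqrt_five : A = -ψ ^ 2 / √5 := by
  rw [goldenConj_sq, A, div_eq_div_iff (by positivity) (by positivity)]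
  ring

theorem B_eq_goldenRatio_sq_div_sqrt_five : B = φ ^ 2 / √5 := by
  rw [goldenRatio_sq, B, div_eq_div_iff (by positivity) (by positivity)]
  ring

theorem MB_eq_two_mul_fib_sub_one (k : ℕ) : MB k = 2 * ((Nat.fib (k + 2) : ℝ) - 1) := by
  have h5 : √5 ≠ 0 := by positivity
  rw [MB, u1_eq_goldenConj, u2_eq_goldenRatio, mul_div_assoc, mul_div_assoc,
    pow_succ_sub_self_div_sq_sub_one goldenConj_sq, pow_succ_sub_self_div_sq_sub_one goldenRatio_sq,
    A_eq_neg_goldenConj_sq_div_sqrt_five, B_eq_goldenRatio_sq_div_sqrt_five, coe_fib_eq]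
  field_simp
  linear_combination (φ + ψ) * goldenRatio_sub_goldenConj - √5 * goldenRatio_add_goldenConj

theorem MB_add_two (n : ℕ) : MB (n + 2) = MB (n + 1) + MB n + 2 := by
  simp only [MB_eq_two_mul_fib_sub_one, Nat.fib_add_two (n := n + 2)]
  push_cast
  ring

/-- `M_B(1) = 2`, `M_B(2) = 4`, `M_B(k) = M_B(k-1) + M_B(k-2) + 2` for `k ≥ 3`, and
consequently `M_B(k) = 2 (F_{k+2} - 1)` for all `k ≥ 1`, where `F` is the Fibonacci
sequence with `F_1 = F_2 = 1`. -/
theorem MB_values_recurrence_and_fib :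
    MB 1 = 2 ∧ MB 2 = 4 ∧
    (∀ k : ℕ, 3 ≤ k → MB k = MB (k - 1) + MB (k - 2) + 2) ∧
    (∀ k : ℕ, 1 ≤ k → MB k = 2 * ((Nat.fib (k + 2) : ℝ) - 1)) := by
  refine ⟨?_, ?_, fun k hk => ?_, fun k _ => MB_eq_two_mul_fib_sub_one k⟩
  · norm_num [MB_eq_two_mul_fib_sub_one]
  · norm_num [MB_eq_two_mul_fib_sub_one]
  · obtain ⟨n, rfl⟩ : ∃ n, k = n + 2 := ⟨k - 2, by omega⟩
    simpa using MB_add_two n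
end

section
/- For every integer n ≥ 4, with m = 2^{n−1}+2^{n−3}, there exists a bipartite totally regular (1,1)-mixed graph on N = 4m = 5·2^{n−1} vertices whose diameter is at most 2n+1. -/
/-- `hasWalk step d u v` : there is a directed walk of length `d` from `u` to `v`. -/
def hasWalk {V : Type*} (step : V → V → Prop) : ℕ → V → V → Prop
  | 0, u, v => u = v
  | d + 1, u, v => ∃ w, step u w ∧ hasWalk step d w v

namespace MixedAux

theorem hasWalk_trans {V : Type*} {s : V → V → Prop} {d₁ : ℕ} {u w : V} {d₂ : ℕ} {v : V}
    (h1 : hasWalk s d₁ u w) (h2 : hasWalk s d₂ w v) : hasWalk s (d₁ + d₂) u v := by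
  induction d₁ generalizing u with
  | zero => cases h1; simpa using h2
  | succ d ih =>
    obtain ⟨z, hz, h1'⟩ := h1
    have : d + 1 + d₂ = (d + d₂) + 1 := by omega
    rw [this]
    exact ⟨z, hz, ih h1'⟩

variable {k : ℕ}

/-- rotate-with-complement -/
def rot (x : ZMod k → Bool) : ZMod k → Bool := fun i => if i = 0 then !(x (i + 1)) else x (i + 1)

def rotInv (y : ZMod k → Bool) : ZMod k → Bool :=
  fun j => if j = 1 then !(y (j - 1)) else y (j - 1)

/-- flip the bit at position `p` -/
def flip (p : ZMod k) (x : ZMod k → Bool) : ZMod k → Bool := fun i => if i = p then !(x i) else x i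

theorem rotInv_rot (x : ZMod k → Bool) : rotInv (rot x) = x := by
  funext j
  simp only [rotInv, rot, sub_add_cancel]
  by_cases h : j = 1
  · have h0 : j - 1 = 0 := by rw [h]; ring
    simp [h, h0]
  · have h0 : ¬ (j - 1 = 0) := fun hc => h (by linear_combination hc)
    simp [h, h0]

theorem rot_rotInv (y : ZMod k → Bool) : rot (rotInv y) = y := by
  funext i
  simp only [rot, rotInv, add_sub_cancel_right]
  by_cases h : i = 0
  · have h1 : i + 1 = 1 := by rw [h]; ring
    simp [h, h1]
  · have h1 : ¬ (i + 1 = 1) := fun hc => h (by linear_combination hc)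
    simp [h, h1]

theorem flip_flip (p : ZMod k) (x : ZMod k → Bool) : flip p (flip p x) = x := by
  funext i
  simp only [flip]
  by_cases h : i = p <;> simp [h]

theorem rot_flip (p : ZMod k) (x : ZMod k → Bool) :
    rot (flip p x) = flip (p - 1) (rot x) := by
  funext i
  by_cases hp : i + 1 = p
  · have hpe : p = i + 1 := hp.symm
    subst hpe
    have e : i + 1 - 1 = i := by ring
    simp only [rot, flip, e, if_pos rfl]
    by_cases h0 : i = 0 <;> simp [h0]
  · have h2 : ¬ (i = p - 1) := fun hc => hp (by linear_combination hc)
    simp only [rot, flip, if_neg hp, if_neg h2]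

theorem rot_iter_flip (m : ℕ) (p : ZMod k) (x : ZMod k → Bool) :
    rot^[m] (flip p x) = flip (p - (m : ZMod k)) (rot^[m] x) := by
  induction m generalizing p x with
  | zero => simp
  | succ m ih =>
    rw [Function.iterate_succ_apply, Function.iterate_succ_apply, rot_flip, ih]
    push_cast
    ring_nf

/-- vertex type -/
abbrev MV (k : ℕ) : Type := ZMod 5 × (ZMod k → Bool)

def alphaF (u : MV k) : MV k := (u.1 + 1, rot u.2)
def alphaInv (u : MV k) : MV k := (u.1 - 1, rotInv u.2)
def epsF (u : MV k) : MV k := (u.1, flip 0 u.2)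

def arcR (u v : MV k) : Prop := v = alphaF u
def edgeR (u v : MV k) : Prop := v = epsF u ∨ u = epsF v
def stepR (u v : MV k) : Prop := edgeR u v ∨ arcR u v

theorem epsF_invol (u : MV k) : epsF (epsF u) = u := by
  simp [epsF, flip_flip]

theorem alphaInv_alphaF (u : MV k) : alphaInv (alphaF u) = u := by
  simp [alphaInv, alphaF, rotInv_rot]

theorem alphaF_alphaInv (u : MV k) : alphaF (alphaInv u) = u := by
  simp [alphaInv, alphaF, rot_rotInv]

def round (b : Bool) (u : MV k) : MV k := alphaF (if b then epsF u else u)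

def go (L : List Bool) (u : MV k) : MV k := L.foldl (fun u b => round b u) u

def cost (L : List Bool) : ℕ := L.foldr (fun b acc => (if b then 2 else 1) + acc) 0

theorem go_append (A B : List Bool) (u : MV k) : go (A ++ B) u = go B (go A u) := by
  simp [go, List.foldl_append]

theorem cost_append (A B : List Bool) : cost (A ++ B) = cost A + cost B := by
  induction A with
  | nil => simp [cost]
  | cons b T ih => simp [cost] at ih ⊢; omega

theorem walk_go (L : List Bool) (u : MV k) : hasWalk (stepR (k := k)) (cost L) u (go L u) := by
  induction L generalizing u with
  | nil => simp [go, cost, hasWalk]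
  | cons b T ih =>
    have hgo : go (b :: T) u = go T (round b u) := rfl
    cases b with
    | false =>
      have hc : cost (false :: T) = cost T + 1 := by simp [cost]; omega
      rw [hgo, hc]
      have h1 : hasWalk (stepR (k := k)) 1 u (round false u) :=
        ⟨round false u, Or.inr rfl, rfl⟩
      simpa [Nat.add_comm] using hasWalk_trans h1 (ih (round false u))
    | true =>
      have hc : cost (true :: T) = cost T + 2 := by simp [cost]; omega
      rw [hgo, hc]
      have h1 : hasWalk (stepR (k := k)) 2 u (round true u) :=
        ⟨epsF u, Or.inl (Or.inl rfl), ⟨round true u, Or.inr rfl, rfl⟩⟩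
      simpa [Nat.add_comm] using hasWalk_trans h1 (ih (round true u))

section Main

variable [NeZero k]

/-- the plan list: flips chosen by `g` at final positions `-1, …, -m` -/
def mk (g : ZMod k → Bool) : ℕ → List Bool
  | 0 => []
  | m + 1 => g (-((m + 1 : ℕ) : ZMod k)) :: mk g m

theorem cost_mk (g : ZMod k → Bool) (m : ℕ) : cost (mk g m) ≤ 2 * m := by
  induction m with
  | zero => simp [mk, cost]
  | succ m ih =>
    have : cost (mk g (m + 1)) = (if g (-((m + 1 : ℕ) : ZMod k)) then 2 else 1) + cost (mk g m) := rfl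
    rw [this]
    split <;> omega

theorem go_replicate (r : ℕ) (a : ZMod 5) (x : ZMod k → Bool) :
    go (List.replicate r false) (a, x) = (a + (r : ZMod 5), rot^[r] x) := by
  induction r generalizing a x with
  | zero => simp [go]
  | succ r ih =>
    have h1 : go (List.replicate (r + 1) false) (a, x)
        = go (List.replicate r false) (round false (a, x)) := rfl
    rw [h1]
    have h2 : round false (a, x) = (a + 1, rot x) := rfl
    rw [h2, ih]
    rw [Prod.mk.injEq]
    refine ⟨by push_cast; ring, ?_⟩
    rw [← Function.iterate_succ_apply]

theorem go_mk (g : ZMod k → Bool) (m : ℕ) (hm : m + 1 ≤ k) (a : ZMod 5) (x : ZMod k → Bool) :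
    go (mk g m) (a, x) = (a + (m : ZMod 5),
      fun i => if i ≠ 0 ∧ (-i).val ≤ m then xor (rot^[m] x i) (g i) else rot^[m] x i) := by
  induction m generalizing a x with
  | zero =>
    simp only [mk, go, List.foldl_nil, Nat.cast_zero, add_zero, Function.iterate_zero, id_eq]
    rw [Prod.mk.injEq]
    refine ⟨rfl, ?_⟩
    funext i
    have hcon : ¬ (i ≠ 0 ∧ (-i).val ≤ 0) := by
      rintro ⟨h1, h2⟩
      have hv0 : (-i).val = 0 := by omega
      have h3 : -i = 0 := (ZMod.val_eq_zero (-i)).mp hv0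
      exact h1 (neg_eq_zero.mp h3)
    simp [hcon]
  | succ m ih =>
    have hb : (m + 1 : ℕ) < k := by omega
    set b := g (-((m + 1 : ℕ) : ZMod k)) with hbdef
    have h1 : go (mk g (m + 1)) (a, x) = go (mk g m) (round b (a, x)) := rfl
    have h2 : round b (a, x) = (a + 1, if b then rot (flip 0 x) else rot x) := by
      cases b <;> rfl
    have h3 : (if b then rot (flip 0 x) else rot x)
        = (if b then flip (-1) (rot x) else rot x) := by
      rw [rot_flip]; norm_num
    set p : ZMod k := -((m + 1 : ℕ) : ZMod k) with hpdef
    have f1 : (((m + 1 : ℕ) : ZMod k)).val = m + 1 := by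
      rw [ZMod.val_natCast, Nat.mod_eq_of_lt hb]
    have f2 : (-p).val = m + 1 := by rw [hpdef, neg_neg, f1]
    have f3 : p ≠ 0 := by
      intro h
      rw [h, neg_zero, ZMod.val_zero] at f2
      omega
    rw [h1, h2, h3, ih (by omega)]
    rw [Prod.mk.injEq]
    refine ⟨by push_cast; ring, ?_⟩
    set Z : ZMod k → Bool := rot^[m + 1] x with hZdef
    have hX : rot^[m] (if b then flip (-1) (rot x) else rot x)
        = (if b then flip p Z else Z) := by
      cases hbv : b
      · simp only [if_neg, Bool.false_eq_true, ite_false]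
        rw [hZdef, ← Function.iterate_succ_apply]
      · simp only [ite_true]
        have hp2 : (-1 - (m : ZMod k)) = p := by rw [hpdef]; push_cast; ring
        rw [rot_iter_flip, hp2, hZdef, ← Function.iterate_succ_apply]
    rw [hX]
    funext i
    by_cases hi : i = p
    · rw [hi]
      have hc1 : ¬ (p ≠ 0 ∧ (-p).val ≤ m) := by rintro ⟨-, h⟩; omega
      have hc2 : p ≠ 0 ∧ (-p).val ≤ m + 1 := ⟨f3, by omega⟩
      rw [if_neg hc1, if_pos hc2]
      have hgb : g p = b := hbdef.symm
      cases hbv : b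
      · rw [hbv] at hgb
        simp [hgb]
      · rw [hbv] at hgb
        simp [hgb, flip]
    · have hflip : (if b then flip p Z else Z) i = Z i := by
        cases b
        · rfl
        · simp only [ite_true, flip, if_neg hi]
      rw [hflip]
      have hcond : (i ≠ 0 ∧ (-i).val ≤ m) ↔ (i ≠ 0 ∧ (-i).val ≤ m + 1) := by
        constructor
        · rintro ⟨h1, h2⟩; exact ⟨h1, by omega⟩
        · rintro ⟨h1, h2⟩
          refine ⟨h1, ?_⟩
          rcases Nat.lt_or_ge (-i).val (m + 1) with h | h
          · omega
          · exfalso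
            have hv : (-i).val = m + 1 := by omega
            have : -i = ((m + 1 : ℕ) : ZMod k) := by
              have := ZMod.natCast_val (R := ZMod k) (-i)
              rw [ZMod.cast_id] at this
              rw [← this, hv]
            exact hi (by rw [hpdef, ← this, neg_neg])
      by_cases hc : i ≠ 0 ∧ (-i).val ≤ m
      · rw [if_pos hc, if_pos (hcond.mp hc)]
      · rw [if_neg hc, if_neg (fun h => hc (hcond.mpr h))]

theorem cost_replicate (r : ℕ) : cost (List.replicate r false) = r := by
  induction r with
  | zero => rfl
  | succ r ih =>
    have : cost (List.replicate (r + 1) false) = 1 + cost (List.replicate r false) := rfl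
    rw [this, ih]; omega

theorem reach (hk : 1 ≤ k) (u v : MV k) :
    ∃ d ≤ 2 * k + 3, hasWalk (stepR (k := k)) d u v := by
  obtain ⟨a, x⟩ := u
  obtain ⟨c, y⟩ := v
  set z : ZMod 5 := c - a - ((k - 1 : ℕ) : ZMod 5) with hzdef
  set r : ℕ := z.val with hrdef
  have hr : r < 5 := ZMod.val_lt z
  have hz : ((r : ℕ) : ZMod 5) = z := by
    rw [hrdef, ZMod.natCast_val, ZMod.cast_id]
  set X : ZMod k → Bool := rot^[k - 1] (rot^[r] x) with hXdef
  set g : ZMod k → Bool := fun i => xor (X i) (y i) with hgdef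
  set L : List Bool := List.replicate r false ++ mk g (k - 1) with hLdef
  have hclen : cost L ≤ 2 * k + 2 := by
    rw [hLdef, cost_append, cost_replicate]
    have := cost_mk g (k - 1)
    omega
  have hgo : go L (a, x) = (a + (r : ZMod 5) + ((k - 1 : ℕ) : ZMod 5),
      fun i => if i ≠ 0 ∧ (-i).val ≤ k - 1 then xor (X i) (g i) else X i) := by
    rw [hLdef, go_append, go_replicate, go_mk g (k - 1) (by omega)]
  have ha : a + (r : ZMod 5) + ((k - 1 : ℕ) : ZMod 5) = c := by
    rw [hz, hzdef]; ring
  set W : ZMod k → Bool := fun i => if i ≠ 0 ∧ (-i).val ≤ k - 1 then xor (X i) (g i) else X i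
    with hWdef
  have hgo2 : go L (a, x) = (c, W) := by rw [hgo, ha]
  have hW : ∀ i, i ≠ 0 → W i = y i := by
    intro i hi
    have hvlt : (-i).val < k := ZMod.val_lt (-i)
    have hcond : i ≠ 0 ∧ (-i).val ≤ k - 1 := ⟨hi, by omega⟩
    rw [hWdef]
    simp only [if_pos hcond, hgdef]
    cases X i <;> cases y i <;> rfl
  have hW0 : W 0 = X 0 := by
    rw [hWdef]
    simp
  have hwalk := walk_go L (a, x)
  rw [hgo2] at hwalk
  by_cases hcase : W 0 = y 0
  · have hWy : W = y := by
      funext i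
      by_cases hi : i = 0
      · rw [hi]; exact hcase
      · exact hW i hi
    rw [hWy] at hwalk
    exact ⟨cost L, by omega, hwalk⟩
  · have hstep : hasWalk (stepR (k := k)) 1 (c, W) (epsF (c, W)) :=
      ⟨epsF (c, W), Or.inl (Or.inl rfl), rfl⟩
    have heq : epsF (c, W) = ((c, y) : MV k) := by
      have h0 : epsF (c, W) = ((c, flip 0 W) : MV k) := rfl
      rw [h0, Prod.mk.injEq]
      refine ⟨rfl, ?_⟩
      funext i
      by_cases hi : i = 0
      · rw [hi]
        show (if (0 : ZMod k) = 0 then !(W 0) else W 0) = y 0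
        rw [if_pos rfl]
        revert hcase
        cases W 0 <;> cases y 0 <;> simp
      · show (if i = 0 then !(W i) else W i) = y i
        rw [if_neg hi]
        exact hW i hi
    rw [heq] at hstep
    exact ⟨cost L + 1, by omega, hasWalk_trans hwalk hstep⟩

/-- bit-parity, in `ZMod 2` -/
def S (x : ZMod k → Bool) : ZMod 2 := ∑ i, if x i then 1 else 0

theorem S_flip (p : ZMod k) (x : ZMod k → Bool) : S (flip p x) = S x + 1 := by
  unfold S flip
  have h : ∀ i : ZMod k, (if (if i = p then !(x i) else x i) then (1 : ZMod 2) else 0)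
      = (if x i then 1 else 0) + (if i = p then 1 else 0) := by
    intro i
    by_cases h : i = p <;> cases hxi : x i <;> simp [h, hxi] <;> decide
  rw [Finset.sum_congr rfl (fun i _ => h i), Finset.sum_add_distrib,
    Finset.sum_ite_eq' Finset.univ p (fun _ => (1 : ZMod 2))]
  simp

theorem S_rot (x : ZMod k → Bool) : S (rot x) = S x + 1 := by
  unfold S rot
  have h : ∀ i : ZMod k, (if (if i = 0 then !(x (i + 1)) else x (i + 1)) then (1 : ZMod 2) else 0)
      = (if x (i + 1) then 1 else 0) + (if i = 0 then 1 else 0) := by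
    intro i
    by_cases h : i = 0 <;> cases hxi : x (i + 1) <;> simp [h, hxi] <;> decide
  rw [Finset.sum_congr rfl (fun i _ => h i), Finset.sum_add_distrib,
    Finset.sum_ite_eq' Finset.univ 0 (fun _ => (1 : ZMod 2))]
  have he : ∑ i : ZMod k, (if x (i + 1) then (1 : ZMod 2) else 0)
      = ∑ j : ZMod k, (if x j then (1 : ZMod 2) else 0) :=
    Fintype.sum_equiv (Equiv.addRight 1) _ _ (fun i => rfl)
  rw [he]
  simp

end Main

end MixedAux

/-- For every integer $n ≥ 4$, with $m = 2^{n-1}+2^{n-3}$, there exists a bipartite totally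
regular $(1,1)$-mixed graph on $N = 4m = 5·2^{n-1}$ vertices whose diameter is at most
$2n+1$. -/
theorem exists_bipartite_totally_regular_mixed_graph (n m : ℕ) (hn : 4 ≤ n)
    (hm : m = 2 ^ (n - 1) + 2 ^ (n - 3)) :
    ∃ (V : Type) (edge arc : V → V → Prop),
      Finite V ∧
      -- N = 4m = 5·2^{n-1} vertices
      Nat.card V = 4 * m ∧ 4 * m = 5 * 2 ^ (n - 1) ∧
      -- edge relation is symmetric
      Symmetric edge ∧
      -- bipartite
      (∃ P : V → Prop,
        (∀ u v, edge u v → (P u ↔ ¬ P v)) ∧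
        (∀ u v, arc u v → (P u ↔ ¬ P v))) ∧
      -- totally regular (1,1): exactly one edge, one out-arc and one in-arc per vertex
      (∀ v : V, ∃! w, edge v w) ∧
      (∀ v : V, ∃! w, arc v w) ∧
      (∀ v : V, ∃! u, arc u v) ∧
      -- diameter at most 2n+1
      (∀ u v : V, ∃ d ≤ 2 * n + 1, hasWalk (fun a b => edge a b ∨ arc a b) d u v) := by

  classical
  haveI : NeZero (n - 1) := ⟨by omega⟩
  have harith : 4 * m = 5 * 2 ^ (n - 1) := by
    have h3 : n - 1 = (n - 3) + 2 := by omega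
    rw [hm, h3, pow_add]
    ring
  set k : ℕ := n - 1 with hkdef
  have hk1 : 1 ≤ k := by omega
  refine ⟨MixedAux.MV k, MixedAux.edgeR, MixedAux.arcR, inferInstance, ?_, harith, ?_, ?_,
    ?_, ?_, ?_, ?_⟩
  · -- cardinality
    rw [harith]
    rw [Nat.card_eq_fintype_card, Fintype.card_prod, ZMod.card 5, Fintype.card_fun,
      Fintype.card_bool, ZMod.card k]
  · -- symmetric
    intro u v h
    exact h.symm
  · -- bipartite
    have hz1 : ∀ z : ZMod 2, (z = 0 ↔ ¬ (z + 1 = 0)) := by decide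
    have hz2 : ∀ z : ZMod 2, (z + 1 = 0 ↔ ¬ (z = 0)) := by decide
    refine ⟨fun v => MixedAux.S v.2 = 0, ?_, ?_⟩
    · intro u v h
      rcases h with h | h
      · rw [h]
        show MixedAux.S u.2 = 0 ↔ ¬ (MixedAux.S (MixedAux.flip 0 u.2) = 0)
        rw [MixedAux.S_flip]
        exact hz1 _
      · rw [h]
        show MixedAux.S (MixedAux.flip 0 v.2) = 0 ↔ ¬ (MixedAux.S v.2 = 0)
        rw [MixedAux.S_flip]
        exact hz2 _
    · intro u v h
      rw [h]
      show MixedAux.S u.2 = 0 ↔ ¬ (MixedAux.S (MixedAux.rot u.2) = 0)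
      rw [MixedAux.S_rot]
      exact hz1 _
  · -- unique edge
    intro v
    refine ⟨MixedAux.epsF v, Or.inl rfl, ?_⟩
    intro w h
    rcases h with h | h
    · exact h
    · rw [h]
      exact (MixedAux.epsF_invol w).symm
  · -- unique out-arc
    intro v
    exact ⟨MixedAux.alphaF v, rfl, fun w h => h⟩
  · -- unique in-arc
    intro v
    refine ⟨MixedAux.alphaInv v, (MixedAux.alphaF_alphaInv v).symm, ?_⟩
    intro u h
    rw [h]
    exact (MixedAux.alphaInv_alphaF u).symm
  · -- diameter
    intro u v
    obtain ⟨d, hd, hw⟩ := MixedAux.reach hk1 u v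
    exact ⟨d, by omega, hw⟩
end

section
/- Let n ≥ 2 be an even integer and c an odd integer with 0 < c < n, and suppose that the chordal ring mixed graph CRM(n,c) has diameter at most k. If k is odd, then n ≤ (k+1)²/2; if k is even, then n ≤ k(k+2)/2. -/
/-- The arcs of the chordal ring mixed graph `CRM(n,c)`: `i → i+1`. -/
def crmArc (n : ℕ) (u v : ZMod n) : Prop := v = u + 1

/-- The edges of `CRM(n,c)`: `i ∼ i + c` for odd `i` (stated symmetrically). -/
def crmEdge (n c : ℕ) (u v : ZMod n) : Prop :=
  (u.val % 2 = 1 ∧ v = u + (c : ZMod n)) ∨ (v.val % 2 = 1 ∧ u = v + (c : ZMod n))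

/-- One step in the associated digraph of `CRM(n,c)` (edge or arc). -/
def crmStep (n c : ℕ) (u v : ZMod n) : Prop := crmEdge n c u v ∨ crmArc n u v

section CRMaux

variable {n c : ℕ}

lemma crm_val_add_mod_two (hne : Even n) [NeZero n] (u x : ZMod n) :
    (u + x).val % 2 = (u.val + x.val) % 2 := by
  rw [ZMod.val_add]
  exact Nat.mod_mod_of_dvd _ hne.two_dvd

lemma crm_step_parity (hn : 2 ≤ n) (hne : Even n) (hc : Odd c) (hcn : c < n)
    {u v : ZMod n} (h : crmStep n c u v) : v.val % 2 = (u.val + 1) % 2 := by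
  haveI : NeZero n := ⟨by omega⟩
  have hc2 : c % 2 = 1 := Nat.odd_iff.mp hc
  have hcval : ((c : ℕ) : ZMod n).val = c := ZMod.val_natCast_of_lt hcn
  have h1 : (1 : ZMod n).val = 1 := by
    rw [← Nat.cast_one]; exact ZMod.val_natCast_of_lt (by omega)
  unfold crmStep crmEdge crmArc at h
  rcases h with (⟨hu, rfl⟩ | ⟨hv, hveq⟩) | harc
  · rw [crm_val_add_mod_two hne, hcval]; omega
  · have h2 : u.val % 2 = (v.val + c) % 2 := by
      rw [hveq, crm_val_add_mod_two hne, hcval]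
    omega
  · rw [harc, crm_val_add_mod_two hne, h1]

lemma crm_walk_parity (hn : 2 ≤ n) (hne : Even n) (hc : Odd c) (hcn : c < n) :
    ∀ d (u v : ZMod n), hasWalk (crmStep n c) d u v → v.val % 2 = (u.val + d) % 2 := by
  intro d
  induction d with
  | zero => intro u v h; simp only [hasWalk] at h; simp [h.symm]
  | succ d ih =>
    intro u v h
    simp only [hasWalk] at h
    obtain ⟨w, hstep, hwalk⟩ := h
    have hw := crm_step_parity hn hne hc hcn hstep
    have hv := ih w v hwalk
    omega

lemma crm_walk_decomp (hn : 2 ≤ n) (hne : Even n) (hc : Odd c) (hcn : c < n) :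
    ∀ d (u v : ZMod n), hasWalk (crmStep n c) d u v →
      ∃ s a b : ℕ, s + a + b = d ∧ 2 * a ≤ d + u.val % 2 ∧ 2 * b + u.val % 2 ≤ d + 1 ∧
        v = u + (s : ZMod n) + (a : ZMod n) * (c : ZMod n) - (b : ZMod n) * (c : ZMod n) := by
  intro d
  induction d with
  | zero =>
    intro u v h
    simp only [hasWalk] at h
    exact ⟨0, 0, 0, by simp, by simp, by omega, by simp [h.symm]⟩
  | succ d ih =>
    intro u v h
    simp only [hasWalk] at h
    obtain ⟨w, hstep, hwalk⟩ := h
    have hw := crm_step_parity hn hne hc hcn hstep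
    obtain ⟨s, a, b, hd, ha, hb, heq⟩ := ih w v hwalk
    unfold crmStep crmEdge crmArc at hstep
    rcases hstep with (⟨hu, hwc⟩ | ⟨hwodd, huc⟩) | harc
    · refine ⟨s, a + 1, b, by omega, by omega, by omega, ?_⟩
      rw [heq, hwc]; push_cast; ring
    · have hwc : w = u - (c : ZMod n) := by rw [huc]; ring
      refine ⟨s, a, b + 1, by omega, by omega, by omega, ?_⟩
      rw [heq, hwc]; push_cast; ring
    · refine ⟨s + 1, a, b, by omega, by omega, by omega, ?_⟩
      rw [heq, harc]; push_cast; ring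

lemma crm_cover (hn : 2 ≤ n) (hne : Even n) (hc : Odd c) (hcn : c < n)
    {k : ℕ} (hdiam : ∀ u v : ZMod n, ∃ d ≤ k, hasWalk (crmStep n c) d u v)
    (v : ZMod n) :
    (∃ s t : ℕ, s + t ≤ k ∧ (s + t) % 2 = v.val % 2 ∧ t ≤ s ∧
        v = (s : ZMod n) + (t : ZMod n) * (c : ZMod n)) ∨
    (∃ s t : ℕ, s + t ≤ k ∧ (s + t) % 2 = v.val % 2 ∧ 1 ≤ t ∧ t ≤ s + 1 ∧
        v = (s : ZMod n) - (t : ZMod n) * (c : ZMod n)) := by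
  haveI : NeZero n := ⟨by omega⟩
  obtain ⟨d, hd, hwalk⟩ := hdiam 0 v
  have h0 : (0 : ZMod n).val = 0 := ZMod.val_zero
  have hpar := crm_walk_parity hn hne hc hcn d 0 v hwalk
  rw [h0] at hpar
  obtain ⟨s, a, b, hdsum, ha, hb, heq⟩ := crm_walk_decomp hn hne hc hcn d 0 v hwalk
  rw [h0] at ha hb
  rcases le_or_gt b a with hba | hba
  · left
    refine ⟨s, a - b, by omega, by omega, by omega, ?_⟩
    rw [heq, Nat.cast_sub hba]; ring
  · right
    refine ⟨s, b - a, by omega, by omega, by omega, by omega, ?_⟩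
    rw [heq, Nat.cast_sub hba.le]; ring

end CRMaux

def triSet (N : ℕ) : Finset ((_ : ℕ) × ℕ) :=
  (Finset.range N).sigma fun x => Finset.range (N - x)

lemma triSet_card (N : ℕ) : 2 * (triSet N).card = N * (N + 1) := by
  induction N with
  | zero => simp [triSet]
  | succ N ih =>
    have hcard : ∀ M : ℕ, (triSet M).card = ∑ x ∈ Finset.range M, (M - x) := by
      intro M; rw [triSet, Finset.card_sigma]; simp
    rw [hcard] at ih ⊢
    rw [Finset.sum_range_succ]
    have hsum : ∑ x ∈ Finset.range N, (N + 1 - x)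
        = (∑ x ∈ Finset.range N, (N - x)) + N := by
      have h1 : ∑ x ∈ Finset.range N, (N + 1 - x)
          = ∑ x ∈ Finset.range N, ((N - x) + 1) := by
        refine Finset.sum_congr rfl fun x hx => ?_
        have := Finset.mem_range.mp hx
        omega
      rw [h1, Finset.sum_add_distrib]
      simp
    rw [hsum]
    have h2 : N + 1 - N = 1 := by omega
    rw [h2]
    nlinarith [ih]



/-- Moore-like bound for chordal ring mixed graphs: if $CRM(n,c)$ has diameter at most $k$,
then $n ≤ (k+1)^2/2$ for odd $k$ and $n ≤ k(k+2)/2$ for even $k$. -/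
theorem CRM_order_upper_bound (n c k : ℕ) (hn : 2 ≤ n) (hne : Even n)
    (hc : Odd c) (hc0 : 0 < c) (hcn : c < n)
    (hdiam : ∀ u v : ZMod n, ∃ d ≤ k, hasWalk (crmStep n c) d u v) :
    (Odd k → 2 * n ≤ (k + 1) ^ 2) ∧ (Even k → 2 * n ≤ k * (k + 2)) := by
  haveI : NeZero n := ⟨by omega⟩
  have hn2 : n % 2 = 0 := Nat.even_iff.mp hne
  constructor
  · -- odd k
    rintro ⟨m, hk⟩
    -- even vertices, covered by two image families
    set G1 : Finset (ZMod n) := (triSet (m + 1)).image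
      (fun x => ((x.1 + 2 * x.2 : ℕ) : ZMod n) + (x.1 : ZMod n) * (c : ZMod n)) with hG1
    set G2 : Finset (ZMod n) := (triSet m).image
      (fun x => ((x.1 + 1 + 2 * x.2 : ℕ) : ZMod n) - ((x.1 + 1 : ℕ) : ZMod n) * (c : ZMod n))
      with hG2
    set E : Finset (ZMod n) := (Finset.range (n / 2)).image
      (fun j => ((2 * j : ℕ) : ZMod n)) with hE
    have hEcard : E.card = n / 2 := by
      rw [hE, Finset.card_image_of_injOn, Finset.card_range]
      intro j1 h1 j2 h2 hj
      have hv1 : ((2 * j1 : ℕ) : ZMod n).val = 2 * j1 :=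
        ZMod.val_natCast_of_lt (by have := Finset.mem_range.mp h1; omega)
      have hv2 : ((2 * j2 : ℕ) : ZMod n).val = 2 * j2 :=
        ZMod.val_natCast_of_lt (by have := Finset.mem_range.mp h2; omega)
      have : ((2 * j1 : ℕ) : ZMod n).val = ((2 * j2 : ℕ) : ZMod n).val := congrArg ZMod.val hj
      omega
    have hsub : E ⊆ G1 ∪ G2 := by
      intro v hv
      rw [hE, Finset.mem_image] at hv
      obtain ⟨j, hj, rfl⟩ := hv
      have hjlt := Finset.mem_range.mp hj
      have hval : ((2 * j : ℕ) : ZMod n).val = 2 * j :=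
        ZMod.val_natCast_of_lt (by omega)
      rcases crm_cover hn hne hc hcn hdiam ((2 * j : ℕ) : ZMod n) with
        ⟨s, t, hst, hpar, hts, heq⟩ | ⟨s, t, hst, hpar, ht1, hts, heq⟩
      · rw [hval] at hpar
        refine Finset.mem_union_left _ ?_
        rw [hG1, Finset.mem_image]
        refine ⟨⟨t, (s - t) / 2⟩, ?_, ?_⟩
        · simp only [triSet, Finset.mem_sigma, Finset.mem_range]
          omega
        · have hs : t + 2 * ((s - t) / 2) = s := by omega
          rw [hs]
          exact heq.symm
      · rw [hval] at hpar
        refine Finset.mem_union_right _ ?_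
        rw [hG2, Finset.mem_image]
        refine ⟨⟨t - 1, (s - t) / 2⟩, ?_, ?_⟩
        · simp only [triSet, Finset.mem_sigma, Finset.mem_range]
          omega
        · have hs : t - 1 + 1 + 2 * ((s - t) / 2) = s := by omega
          have h1 : t - 1 + 1 = t := by omega
          rw [hs, h1]
          exact heq.symm
    have hchain : n / 2 ≤ (triSet (m + 1)).card + (triSet m).card := by
      calc n / 2 = E.card := hEcard.symm
        _ ≤ (G1 ∪ G2).card := Finset.card_le_card hsub
        _ ≤ G1.card + G2.card := Finset.card_union_le _ _
        _ ≤ (triSet (m + 1)).card + (triSet m).card :=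
            Nat.add_le_add (Finset.card_image_le) (Finset.card_image_le)
    have t1 := triSet_card (m + 1)
    have t2 := triSet_card m
    have h4 : 2 * n ≤ 4 * ((triSet (m + 1)).card + (triSet m).card) := by omega
    subst hk
    nlinarith [h4, t1, t2]
  · -- even k
    rintro ⟨m, hk⟩
    rw [hk]
    set G1 : Finset (ZMod n) := (triSet m).image
      (fun x => ((x.1 + 1 + 2 * x.2 : ℕ) : ZMod n) + (x.1 : ZMod n) * (c : ZMod n)) with hG1
    set G2 : Finset (ZMod n) := (triSet m).image
      (fun x => ((x.1 + 2 * x.2 : ℕ) : ZMod n) - ((x.1 + 1 : ℕ) : ZMod n) * (c : ZMod n))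
      with hG2
    set O : Finset (ZMod n) := (Finset.range (n / 2)).image
      (fun j => ((2 * j + 1 : ℕ) : ZMod n)) with hO
    have hOcard : O.card = n / 2 := by
      rw [hO, Finset.card_image_of_injOn, Finset.card_range]
      intro j1 h1 j2 h2 hj
      have hv1 : ((2 * j1 + 1 : ℕ) : ZMod n).val = 2 * j1 + 1 :=
        ZMod.val_natCast_of_lt (by have := Finset.mem_range.mp h1; omega)
      have hv2 : ((2 * j2 + 1 : ℕ) : ZMod n).val = 2 * j2 + 1 :=
        ZMod.val_natCast_of_lt (by have := Finset.mem_range.mp h2; omega)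
      have : ((2 * j1 + 1 : ℕ) : ZMod n).val = ((2 * j2 + 1 : ℕ) : ZMod n).val := congrArg ZMod.val hj
      omega
    have hsub : O ⊆ G1 ∪ G2 := by
      intro v hv
      rw [hO, Finset.mem_image] at hv
      obtain ⟨j, hj, rfl⟩ := hv
      have hjlt := Finset.mem_range.mp hj
      have hval : ((2 * j + 1 : ℕ) : ZMod n).val = 2 * j + 1 :=
        ZMod.val_natCast_of_lt (by omega)
      rcases crm_cover hn hne hc hcn hdiam ((2 * j + 1 : ℕ) : ZMod n) with
        ⟨s, t, hst, hpar, hts, heq⟩ | ⟨s, t, hst, hpar, ht1, hts, heq⟩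
      · rw [hval] at hpar
        refine Finset.mem_union_left _ ?_
        rw [hG1, Finset.mem_image]
        refine ⟨⟨t, (s - t - 1) / 2⟩, ?_, ?_⟩
        · simp only [triSet, Finset.mem_sigma, Finset.mem_range]
          omega
        · have hs : t + 1 + 2 * ((s - t - 1) / 2) = s := by omega
          rw [hs]
          exact heq.symm
      · rw [hval] at hpar
        refine Finset.mem_union_right _ ?_
        rw [hG2, Finset.mem_image]
        refine ⟨⟨t - 1, (s - t + 1) / 2⟩, ?_, ?_⟩
        · simp only [triSet, Finset.mem_sigma, Finset.mem_range]
          omega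
        · have hs : t - 1 + 2 * ((s - t + 1) / 2) = s := by omega
          have h1 : t - 1 + 1 = t := by omega
          rw [hs, h1]
          exact heq.symm
    have hchain : n / 2 ≤ (triSet m).card + (triSet m).card := by
      calc n / 2 = O.card := hOcard.symm
        _ ≤ (G1 ∪ G2).card := Finset.card_le_card hsub
        _ ≤ G1.card + G2.card := Finset.card_union_le _ _
        _ ≤ (triSet m).card + (triSet m).card :=
            Nat.add_le_add (Finset.card_image_le) (Finset.card_image_le)
    have t2 := triSet_card m
    have h4 : 2 * n ≤ 4 * ((triSet m).card + (triSet m).card) := by omega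
    nlinarith [h4, t2]
end

section
/- For every integer ℓ ≥ 2, the chordal ring mixed graph CRM(2ℓ², 2ℓ−1) has diameter exactly k = 2ℓ−1. In particular, for every odd integer k ≥ 3 there exists a chordal ring mixed graph with diameter k whose order attains the maximum possible value n = (k+1)²/2. -/
lemma hasWalk_trans {V : Type*} {step : V → V → Prop} :
    ∀ {d1 : ℕ} {d2 : ℕ} {u w v : V}, hasWalk step d1 u w → hasWalk step d2 w v →
      hasWalk step (d1 + d2) u v := by
  intro d1
  induction d1 with
  | zero => intro d2 u w v h1 h2; cases h1; simpa using h2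
  | succ d ih =>
      intro d2 u w v h1 h2
      obtain ⟨x, hx, hw⟩ := h1
      rw [Nat.add_right_comm]
      exact ⟨x, hx, ih hw h2⟩

lemma val_add_nat {n : ℕ} [NeZero n] (hn : 2 ∣ n) (x : ZMod n) (a : ℕ) :
    (x + (a : ZMod n)).val % 2 = (x.val + a) % 2 := by
  rw [ZMod.val_add, ZMod.val_natCast, Nat.mod_mod_of_dvd _ hn, Nat.add_mod,
    Nat.mod_mod_of_dvd _ hn, ← Nat.add_mod]

lemma walk_plain {n c : ℕ} : ∀ (s : ℕ) (u : ZMod n),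
    hasWalk (crmStep n c) s u (u + (s : ZMod n)) := by
  intro s
  induction s with
  | zero => intro u; show u = u + ((0:ℕ):ZMod n); simp
  | succ s ih =>
      intro u
      refine ⟨u + 1, Or.inr rfl, ?_⟩
      have := ih (u + 1)
      have he : (u + 1) + (s : ZMod n) = u + ((s + 1 : ℕ) : ZMod n) := by push_cast; ring
      rwa [he] at this

lemma walk_chord {n c : ℕ} {u : ZMod n} (hu : u.val % 2 = 1) :
    hasWalk (crmStep n c) 1 u (u + (c : ZMod n)) :=
  ⟨u + c, Or.inl (Or.inl ⟨hu, rfl⟩), rfl⟩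

lemma walk_back {n c : ℕ} [NeZero n] (hn : 2 ∣ n) (hc : c % 2 = 1) (hcn : c ≤ n)
    {u : ZMod n} (hu : u.val % 2 = 0) :
    hasWalk (crmStep n c) 1 u (u + ((n - c : ℕ) : ZMod n)) := by
  refine ⟨u + ((n - c : ℕ) : ZMod n), Or.inl (Or.inr ⟨?_, ?_⟩), rfl⟩
  · rw [val_add_nat hn]
    obtain ⟨e, he⟩ := hn
    omega
  · rw [add_assoc, ← Nat.cast_add, Nat.sub_add_cancel hcn, ZMod.natCast_self, add_zero]

lemma walk_blockF {n c : ℕ} [NeZero n] (hn : 2 ∣ n) (hc : c % 2 = 1) :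
    ∀ (m : ℕ) (u : ZMod n), u.val % 2 = 1 →
      hasWalk (crmStep n c) (2 * m) u (u + ((m * (c + 1) : ℕ) : ZMod n)) := by
  intro m
  induction m with
  | zero => intro u hu; show u = u + ((0 * (c+1) : ℕ) : ZMod n); simp
  | succ m ih =>
      intro u hu
      have h2 : hasWalk (crmStep n c) 2 u (u + (((c + 1 : ℕ)) : ZMod n)) := by
        refine ⟨u + (c : ZMod n), Or.inl (Or.inl ⟨hu, rfl⟩), u + ((c+1:ℕ) : ZMod n),
          Or.inr (show u + ((c+1:ℕ) : ZMod n) = u + (c : ZMod n) + 1 by push_cast; ring), rfl⟩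
      have hpar : (u + ((c + 1 : ℕ) : ZMod n)).val % 2 = 1 := by
        rw [val_add_nat hn]; omega
      have := hasWalk_trans h2 (ih _ hpar)
      have he : (2 : ℕ) + 2 * m = 2 * (m + 1) := by ring
      have he2 : u + ((c + 1 : ℕ) : ZMod n) + ((m * (c + 1) : ℕ) : ZMod n)
          = u + (((m + 1) * (c + 1) : ℕ) : ZMod n) := by push_cast; ring
      rwa [he, he2] at this

lemma walk_blockB {n c : ℕ} [NeZero n] (hn : 2 ∣ n) (hc : c % 2 = 1) (hcn : c ≤ n) :
    ∀ (m : ℕ) (u : ZMod n), u.val % 2 = 1 →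
      hasWalk (crmStep n c) (2 * m) u (u + ((m * (n - c + 1) : ℕ) : ZMod n)) := by
  intro m
  induction m with
  | zero => intro u hu; show u = u + ((0 * (n-c+1) : ℕ) : ZMod n); simp
  | succ m ih =>
      intro u hu
      have hpar1 : (u + 1).val % 2 = 0 := by
        have := val_add_nat hn u 1
        rw [Nat.cast_one] at this
        omega
      have hb := walk_back hn hc hcn hpar1
      have h2 : hasWalk (crmStep n c) 2 u (u + (((n - c + 1 : ℕ)) : ZMod n)) := by
        refine ⟨u + 1, Or.inr rfl, ?_⟩
        have he : u + 1 + ((n - c : ℕ) : ZMod n) = u + ((n - c + 1 : ℕ) : ZMod n) := by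
          push_cast; ring
        rwa [he] at hb
      have hpar : (u + ((n - c + 1 : ℕ) : ZMod n)).val % 2 = 1 := by
        rw [val_add_nat hn]
        obtain ⟨e, he⟩ := hn
        omega
      have := hasWalk_trans h2 (ih _ hpar)
      have he : (2 : ℕ) + 2 * m = 2 * (m + 1) := by ring
      have he2 : u + ((n - c + 1 : ℕ) : ZMod n) + ((m * (n - c + 1) : ℕ) : ZMod n)
          = u + (((m + 1) * (n - c + 1) : ℕ) : ZMod n) := by push_cast; ring
      rwa [he, he2] at this

lemma walk_decomp {n c : ℕ} : ∀ (d : ℕ) (u v : ZMod n), hasWalk (crmStep n c) d u v →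
    ∃ a b : ℕ, a + b ≤ d ∧
      v = u + ((((d : ℤ) - a - b) + ((a : ℤ) - b) * c : ℤ) : ZMod n) := by
  intro d
  induction d with
  | zero =>
      intro u v h
      exact ⟨0, 0, le_refl 0, by cases h; push_cast; ring⟩
  | succ d ih =>
      intro u v h
      obtain ⟨w, hw, hwalk⟩ := h
      obtain ⟨a, b, hab, hv⟩ := ih w v hwalk
      rcases hw with (hL | hR) | harc
      · -- chord from odd u : w = u + c
        refine ⟨a + 1, b, by omega, ?_⟩
        rw [hv, hL.2]; push_cast; ring
      · -- back chord : u = w + c, so w = u - c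
        refine ⟨a, b + 1, by omega, ?_⟩
        have hw' : w = u - (c : ZMod n) := by rw [hR.2]; ring
        rw [hv, hw']; push_cast; ring
      · -- arc : w = u + 1
        refine ⟨a, b, by omega, ?_⟩
        rw [hv, harc]; push_cast; ring

lemma crm_arith (L A B D m : ℤ) (hL2 : 2 ≤ L) (hA0 : 0 ≤ A) (hB0 : 0 ≤ B)
    (hABD : A + B ≤ D) (hD : D ≤ 2 * L - 2)
    (hm : (D - A - B) + (A - B) * (2 * L - 1) + 1 = 2 * L ^ 2 * m) : False := by
  have hkey : D + 1 - 2 * A = 2 * L * (m * L + B - A) := by linear_combination hm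
  have hj0 : m * L + B - A = 0 := by
    rcases lt_trichotomy (m * L + B - A) 0 with h | h | h
    · have h1 : m * L + B - A ≤ -1 := by omega
      nlinarith
    · exact h
    · have h1 : 1 ≤ m * L + B - A := by omega
      nlinarith
  rw [hj0, mul_zero] at hkey
  have hmL : m * L = A - B := by linarith
  have hm1 : m ≤ 1 := by nlinarith
  have hm2 : -1 ≤ m := by nlinarith
  interval_cases m
  · rw [show ((-1 : ℤ)) * L = -L by ring] at hmL
    omega
  · rw [zero_mul] at hmL
    omega
  · rw [one_mul] at hmL
    omega

lemma crm_lower (ℓ : ℕ) (hl : 2 ≤ ℓ) :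
    ∃ u v : ZMod (2 * ℓ ^ 2),
      ∀ d < 2 * ℓ - 1, ¬ hasWalk (crmStep (2 * ℓ ^ 2) (2 * ℓ - 1)) d u v := by
  refine ⟨0, -1, ?_⟩
  intro d hd hw
  obtain ⟨a, b, hab, heq⟩ := walk_decomp d 0 (-1) hw
  rw [zero_add] at heq
  have hc : ((2 * ℓ - 1 : ℕ) : ℤ) = 2 * (ℓ : ℤ) - 1 := by
    have h1 : (1 : ℕ) ≤ 2 * ℓ := by omega
    push_cast [h1]; ring
  have h0 : (((((d : ℤ) - a - b) + ((a : ℤ) - b) * ((2 * ℓ - 1 : ℕ) : ℤ)) + 1 : ℤ)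
      : ZMod (2 * ℓ ^ 2)) = 0 := by
    rw [Int.cast_add, ← heq, Int.cast_one]
    ring
  have hdvd : ((2 * ℓ ^ 2 : ℕ) : ℤ) ∣
      ((((d : ℤ) - a - b) + ((a : ℤ) - b) * ((2 * ℓ - 1 : ℕ) : ℤ)) + 1) :=
    (ZMod.intCast_zmod_eq_zero_iff_dvd _ _).mp h0
  obtain ⟨m, hm⟩ := hdvd
  rw [hc] at hm
  refine crm_arith (ℓ : ℤ) a b d m (by exact_mod_cast hl) (Int.natCast_nonneg a)
    (Int.natCast_nonneg b) (by exact_mod_cast hab) ?_ ?_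
  · have h2 : d + 2 ≤ 2 * ℓ := by omega
    have h3 := (Int.ofNat_le.mpr h2)
    push_cast at h3
    linarith
  · rw [hm]; push_cast; ring

lemma crm_upper (ℓ : ℕ) (hl : 2 ≤ ℓ) (u v : ZMod (2 * ℓ ^ 2)) :
    ∃ d ≤ 2 * ℓ - 1, hasWalk (crmStep (2 * ℓ ^ 2) (2 * ℓ - 1)) d u v := by
  haveI : NeZero (2 * ℓ ^ 2) := ⟨by positivity⟩
  have hl2 : 2 * ℓ ≤ ℓ ^ 2 := by nlinarith
  have hn2 : 2 ∣ 2 * ℓ ^ 2 := ⟨ℓ ^ 2, rfl⟩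
  have hcodd : (2 * ℓ - 1) % 2 = 1 := by omega
  have hcn : 2 * ℓ - 1 ≤ 2 * ℓ ^ 2 := by omega
  have h1le : (1 : ℕ) ≤ 2 * ℓ := by omega
  obtain ⟨T, hTt, hTlt⟩ : ∃ T : ℕ, ((T : ZMod (2 * ℓ ^ 2)) = v - u ∧ T < 2 * ℓ ^ 2) :=
    ⟨(v - u).val, ZMod.natCast_rightInverse _, ZMod.val_lt _⟩
  obtain ⟨q, r, hqr, hr⟩ : ∃ q r : ℕ, 2 * ℓ * q + r = T ∧ r < 2 * ℓ :=
    ⟨T / (2 * ℓ), T % (2 * ℓ), Nat.div_add_mod T (2 * ℓ), Nat.mod_lt _ (by omega)⟩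
  have hv : v = u + ((T : ℕ) : ZMod (2 * ℓ ^ 2)) := by rw [hTt]; ring
  have hq : q < ℓ := by
    by_contra h
    push_neg at h
    nlinarith
  have hqrz : 2 * (ℓ : ℤ) * q + r = (T : ℤ) := by exact_mod_cast hqr
  have cast_eq : ∀ N : ℕ, ((2 * ℓ ^ 2 : ℕ) : ℤ) ∣ ((N : ℤ) - (T : ℤ)) →
      ((N : ℕ) : ZMod (2 * ℓ ^ 2)) = ((T : ℕ) : ZMod (2 * ℓ ^ 2)) := by
    intro N hdvd
    have h0 : (((N : ℤ) - (T : ℤ) : ℤ) : ZMod (2 * ℓ ^ 2)) = 0 :=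
      (ZMod.intCast_zmod_eq_zero_iff_dvd _ _).mpr hdvd
    push_cast at h0
    rw [sub_eq_zero] at h0
    exact_mod_cast h0
  rcases Nat.eq_zero_or_pos T with hT0 | hTpos
  · exact ⟨0, by omega, show u = v by rw [hv, hT0]; simp⟩
  rcases Nat.mod_two_eq_zero_or_one u.val with hu | hu
  · -- u even
    rcases Nat.lt_or_ge (2 * q + r) (2 * ℓ) with hA | hC
    · -- forward case
      have w0 := walk_plain (n := 2 * ℓ ^ 2) (c := 2 * ℓ - 1) 1 u
      have hpar1 : (u + ((1 : ℕ) : ZMod (2 * ℓ ^ 2))).val % 2 = 1 := by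
        rw [val_add_nat hn2]; omega
      rcases Nat.eq_zero_or_pos r with hr0 | hrpos
      · -- r = 0, q ≥ 1 : plain 1, blockF (q-1), chord
        have hq1 : 1 ≤ q := by
          rcases Nat.eq_zero_or_pos q with h | h
          · subst h; simp at hqr; omega
          · exact h
        have w1 := walk_blockF (n := 2 * ℓ ^ 2) (c := 2 * ℓ - 1) hn2 hcodd (q - 1) _ hpar1
        have hparw : ((u + ((1 : ℕ) : ZMod (2 * ℓ ^ 2))) +
            (((q - 1) * (2 * ℓ - 1 + 1) : ℕ) : ZMod (2 * ℓ ^ 2))).val % 2 = 1 := by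
          rw [val_add_nat hn2, Nat.add_mod, hpar1]
          have hdd : 2 ∣ (q - 1) * (2 * ℓ - 1 + 1) := Dvd.dvd.mul_left ⟨ℓ, by omega⟩ _
          omega
        have w2 := walk_chord (n := 2 * ℓ ^ 2) (c := 2 * ℓ - 1) hparw
        have w := hasWalk_trans (hasWalk_trans w0 w1) w2
        refine ⟨2 * q, by omega, ?_⟩
        have hlen : 1 + 2 * (q - 1) + 1 = 2 * q := by omega
        rw [hlen] at w
        have hdvd : ((2 * ℓ ^ 2 : ℕ) : ℤ) ∣
            (((1 + (q - 1) * (2 * ℓ - 1 + 1) + (2 * ℓ - 1) : ℕ) : ℤ) - (T : ℤ)) := by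
          refine ⟨0, ?_⟩
          push_cast [Nat.cast_sub h1le, Nat.cast_sub hq1]
          have hr0z : (r : ℤ) = 0 := by exact_mod_cast hr0
          linear_combination hqrz - hr0z
        have hend : u + ((1 : ℕ) : ZMod (2 * ℓ ^ 2)) +
            (((q - 1) * (2 * ℓ - 1 + 1) : ℕ) : ZMod (2 * ℓ ^ 2)) +
            ((2 * ℓ - 1 : ℕ) : ZMod (2 * ℓ ^ 2)) = v := by
          rw [hv, ← cast_eq _ hdvd]
          push_cast
          ring
        rwa [hend] at w
      · -- r ≥ 1 : plain 1, blockF q, plain (r-1)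
        have w1 := walk_blockF (n := 2 * ℓ ^ 2) (c := 2 * ℓ - 1) hn2 hcodd q _ hpar1
        have w2 := walk_plain (n := 2 * ℓ ^ 2) (c := 2 * ℓ - 1) (r - 1)
          ((u + ((1 : ℕ) : ZMod (2 * ℓ ^ 2))) + ((q * (2 * ℓ - 1 + 1) : ℕ) : ZMod (2 * ℓ ^ 2)))
        have w := hasWalk_trans (hasWalk_trans w0 w1) w2
        refine ⟨2 * q + r, by omega, ?_⟩
        have hlen : 1 + 2 * q + (r - 1) = 2 * q + r := by omega
        rw [hlen] at w
        have hdvd : ((2 * ℓ ^ 2 : ℕ) : ℤ) ∣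
            (((1 + q * (2 * ℓ - 1 + 1) + (r - 1) : ℕ) : ℤ) - (T : ℤ)) := by
          refine ⟨0, ?_⟩
          push_cast [Nat.cast_sub h1le, Nat.cast_sub hrpos]
          linear_combination hqrz
        have hend : u + ((1 : ℕ) : ZMod (2 * ℓ ^ 2)) +
            ((q * (2 * ℓ - 1 + 1) : ℕ) : ZMod (2 * ℓ ^ 2)) +
            ((r - 1 : ℕ) : ZMod (2 * ℓ ^ 2)) = v := by
          rw [hv, ← cast_eq _ hdvd]
          push_cast
          ring
        rwa [hend] at w
    · -- backward case : back step, blockB (b-1), plain (r - 2b + 1)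
      obtain ⟨b, hb1, hbq⟩ : ∃ b : ℕ, 1 ≤ b ∧ q + b = ℓ := ⟨ℓ - q, by omega, by omega⟩
      have hrb : 2 * b ≤ r := by omega
      have w0 := walk_back (n := 2 * ℓ ^ 2) (c := 2 * ℓ - 1) hn2 hcodd hcn hu
      have hpar1 : (u + ((2 * ℓ ^ 2 - (2 * ℓ - 1) : ℕ) : ZMod (2 * ℓ ^ 2))).val % 2 = 1 := by
        rw [val_add_nat hn2]; omega
      have w1 := walk_blockB (n := 2 * ℓ ^ 2) (c := 2 * ℓ - 1) hn2 hcodd hcn (b - 1) _ hpar1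
      have w2 := walk_plain (n := 2 * ℓ ^ 2) (c := 2 * ℓ - 1) (r - 2 * b + 1)
        ((u + ((2 * ℓ ^ 2 - (2 * ℓ - 1) : ℕ) : ZMod (2 * ℓ ^ 2))) +
          (((b - 1) * (2 * ℓ ^ 2 - (2 * ℓ - 1) + 1) : ℕ) : ZMod (2 * ℓ ^ 2)))
      have w := hasWalk_trans (hasWalk_trans w0 w1) w2
      refine ⟨r, by omega, ?_⟩
      have hlen : 1 + 2 * (b - 1) + (r - 2 * b + 1) = r := by omega
      rw [hlen] at w
      have hbz : (q : ℤ) + (b : ℤ) = (ℓ : ℤ) := by exact_mod_cast hbq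
      have hdvd : ((2 * ℓ ^ 2 : ℕ) : ℤ) ∣
          ((((2 * ℓ ^ 2 - (2 * ℓ - 1)) + (b - 1) * (2 * ℓ ^ 2 - (2 * ℓ - 1) + 1)
            + (r - 2 * b + 1) : ℕ) : ℤ) - (T : ℤ)) := by
        refine ⟨(b : ℤ) - 1, ?_⟩
        push_cast [Nat.cast_sub h1le, Nat.cast_sub hcn, Nat.cast_sub hb1, Nat.cast_sub hrb]
        linear_combination hqrz - 2 * (ℓ : ℤ) * hbz
      have hend : u + ((2 * ℓ ^ 2 - (2 * ℓ - 1) : ℕ) : ZMod (2 * ℓ ^ 2)) +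
          (((b - 1) * (2 * ℓ ^ 2 - (2 * ℓ - 1) + 1) : ℕ) : ZMod (2 * ℓ ^ 2)) +
          ((r - 2 * b + 1 : ℕ) : ZMod (2 * ℓ ^ 2)) = v := by
        rw [hv, ← cast_eq _ hdvd]
        push_cast
        ring
      rwa [hend] at w
  · -- u odd
    rcases Nat.lt_or_ge (2 * q + r) (2 * ℓ) with hA | hC
    · -- forward : blockF q, plain r
      have w1 := walk_blockF (n := 2 * ℓ ^ 2) (c := 2 * ℓ - 1) hn2 hcodd q u hu
      have w2 := walk_plain (n := 2 * ℓ ^ 2) (c := 2 * ℓ - 1) r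
        (u + ((q * (2 * ℓ - 1 + 1) : ℕ) : ZMod (2 * ℓ ^ 2)))
      have w := hasWalk_trans w1 w2
      refine ⟨2 * q + r, by omega, ?_⟩
      have hdvd : ((2 * ℓ ^ 2 : ℕ) : ℤ) ∣
          (((q * (2 * ℓ - 1 + 1) + r : ℕ) : ℤ) - (T : ℤ)) := by
        refine ⟨0, ?_⟩
        push_cast [Nat.cast_sub h1le]
        linear_combination hqrz
      have hend : u + ((q * (2 * ℓ - 1 + 1) : ℕ) : ZMod (2 * ℓ ^ 2)) +
          ((r : ℕ) : ZMod (2 * ℓ ^ 2)) = v := by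
        rw [hv, ← cast_eq _ hdvd]
        push_cast
        ring
      rwa [hend] at w
    · -- backward : blockB b, plain (r - 2b)
      obtain ⟨b, hb1, hbq⟩ : ∃ b : ℕ, 1 ≤ b ∧ q + b = ℓ := ⟨ℓ - q, by omega, by omega⟩
      have hrb : 2 * b ≤ r := by omega
      have w1 := walk_blockB (n := 2 * ℓ ^ 2) (c := 2 * ℓ - 1) hn2 hcodd hcn b u hu
      have w2 := walk_plain (n := 2 * ℓ ^ 2) (c := 2 * ℓ - 1) (r - 2 * b)
        (u + ((b * (2 * ℓ ^ 2 - (2 * ℓ - 1) + 1) : ℕ) : ZMod (2 * ℓ ^ 2)))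
      have w := hasWalk_trans w1 w2
      refine ⟨r, by omega, ?_⟩
      have hlen : 2 * b + (r - 2 * b) = r := by omega
      rw [hlen] at w
      have hbz : (q : ℤ) + (b : ℤ) = (ℓ : ℤ) := by exact_mod_cast hbq
      have hdvd : ((2 * ℓ ^ 2 : ℕ) : ℤ) ∣
          (((b * (2 * ℓ ^ 2 - (2 * ℓ - 1) + 1) + (r - 2 * b) : ℕ) : ℤ) - (T : ℤ)) := by
        refine ⟨(b : ℤ) - 1, ?_⟩
        push_cast [Nat.cast_sub h1le, Nat.cast_sub hcn, Nat.cast_sub hrb]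
        linear_combination hqrz - 2 * (ℓ : ℤ) * hbz
      have hend : u + ((b * (2 * ℓ ^ 2 - (2 * ℓ - 1) + 1) : ℕ) : ZMod (2 * ℓ ^ 2)) +
          ((r - 2 * b : ℕ) : ZMod (2 * ℓ ^ 2)) = v := by
        rw [hv, ← cast_eq _ hdvd]
        push_cast
        ring
      rwa [hend] at w

/-- For every $ℓ ≥ 2$, the chordal ring mixed graph $CRM(2ℓ^2, 2ℓ-1)$ has diameter exactly
$k = 2ℓ-1$. In particular, for every odd $k ≥ 3$ there is a chordal ring mixed graph with
diameter $k$ attaining the maximum possible order $n = (k+1)^2/2$. -/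
theorem CRM_odd_diameter_optimal :
    (∀ ℓ : ℕ, 2 ≤ ℓ →
      (∀ u v : ZMod (2 * ℓ ^ 2),
        ∃ d ≤ 2 * ℓ - 1, hasWalk (crmStep (2 * ℓ ^ 2) (2 * ℓ - 1)) d u v) ∧
      (∃ u v : ZMod (2 * ℓ ^ 2),
        ∀ d < 2 * ℓ - 1, ¬ hasWalk (crmStep (2 * ℓ ^ 2) (2 * ℓ - 1)) d u v)) ∧
    (∀ k : ℕ, Odd k → 3 ≤ k →
      ∃ n c : ℕ, 2 ≤ n ∧ Even n ∧ Odd c ∧ 0 < c ∧ c < n ∧ 2 * n = (k + 1) ^ 2 ∧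
        (∀ u v : ZMod n, ∃ d ≤ k, hasWalk (crmStep n c) d u v) ∧
        (∃ u v : ZMod n, ∀ d < k, ¬ hasWalk (crmStep n c) d u v)) := by
  constructor
  · intro ℓ hl
    exact ⟨crm_upper ℓ hl, crm_lower ℓ hl⟩
  · intro k hk hk3
    obtain ⟨j, hj⟩ := hk
    set ℓ : ℕ := j + 1 with hℓ
    have hl : 2 ≤ ℓ := by omega
    have hl2 : 2 * ℓ ≤ ℓ ^ 2 := by nlinarith
    have hkl : k = 2 * ℓ - 1 := by omega
    refine ⟨2 * ℓ ^ 2, 2 * ℓ - 1, by omega, ⟨ℓ ^ 2, by ring⟩, ⟨ℓ - 1, by omega⟩,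
      by omega, by omega, ?_, ?_, ?_⟩
    · have hk1 : k + 1 = 2 * ℓ := by omega
      rw [hk1]; ring
    · rw [hkl]; exact crm_upper ℓ hl
    · rw [hkl]; exact crm_lower ℓ hl
end

section
/- For every integer t ≥ 1, the chordal ring mixed graph CRM(8t²+2, (2t−1)²+2t) has diameter exactly k = 4t; its order is n = 8t²+2 = k²/2 + 2 and its chord length is c = (2t−1)²+2t = (k/2−1)² + k/2. -/
section CRMAux

theorem CRM_walk_append {V : Type*} {step : V → V → Prop} :
    ∀ (d1 : ℕ) {u w : V} {d2 : ℕ} {v : V},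
      hasWalk step d1 u w → hasWalk step d2 w v → hasWalk step (d1 + d2) u v := by
  intro d1
  induction d1 with
  | zero =>
    intro u w d2 v h1 h2
    have h : u = w := h1
    rw [Nat.zero_add]; rwa [h]
  | succ d ih =>
    intro u w d2 v h1 h2
    obtain ⟨x, hx, hrest⟩ := h1
    have e : d + 1 + d2 = (d + d2) + 1 := by omega
    rw [e]
    exact ⟨x, hx, ih hrest h2⟩

variable {n c : ℕ} [NeZero n]

theorem CRM_parity_addN (hn2 : 2 ∣ n) (u : ZMod n) (a : ℕ) :
    (u + (a : ZMod n)).val % 2 = (u.val + a) % 2 := by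
  rw [ZMod.val_add, Nat.mod_mod_of_dvd _ hn2, Nat.add_mod, ZMod.val_natCast,
    Nat.mod_mod_of_dvd _ hn2, ← Nat.add_mod]

theorem CRM_parity_subN (hn2 : 2 ∣ n) (u : ZMod n) (a : ℕ) :
    (u - (a : ZMod n)).val % 2 = (u.val + a) % 2 := by
  have h := CRM_parity_addN hn2 (u - (a : ZMod n)) a
  rw [sub_add_cancel] at h
  omega

theorem CRM_step_one (u : ZMod n) : crmStep n c u (u + 1) := Or.inr rfl

theorem CRM_step_chordO {u : ZMod n} (hu : u.val % 2 = 1) :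
    crmStep n c u (u + (c : ZMod n)) :=
  Or.inl (Or.inl ⟨hu, rfl⟩)

theorem CRM_step_chordE (hn2 : 2 ∣ n) (hc1 : c % 2 = 1) {u : ZMod n} (hu : u.val % 2 = 0) :
    crmStep n c u (u - (c : ZMod n)) := by
  have hp : (u - (c : ZMod n)).val % 2 = 1 := by
    have := CRM_parity_subN hn2 u c; omega
  exact Or.inl (Or.inr ⟨hp, by ring⟩)

theorem CRM_walk_units : ∀ (s : ℕ) (u : ZMod n), hasWalk (crmStep n c) s u (u + (s : ZMod n)) := by
  intro s
  induction s with
  | zero => intro u; show u = u + ((0:ℕ) : ZMod n); simp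
  | succ s ih =>
    intro u
    refine ⟨u + 1, CRM_step_one u, ?_⟩
    have h := ih (u + 1)
    have e : u + 1 + (s : ZMod n) = u + ((s + 1 : ℕ) : ZMod n) := by push_cast; ring
    rwa [e] at h

theorem CRM_walk_EPcore (hn2 : 2 ∣ n) (hc1 : c % 2 = 1) :
    ∀ (k : ℕ) (u : ZMod n), u.val % 2 = 0 →
    hasWalk (crmStep n c) (2*k) u (u + ((k + k*c : ℕ) : ZMod n)) := by
  intro k
  induction k with
  | zero => intro u _; show u = u + ((0 + 0*c : ℕ) : ZMod n); simp
  | succ k ih =>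
    intro u hu
    have hp1 : (u + 1 : ZMod n).val % 2 = 1 := by
      have h := CRM_parity_addN hn2 u 1
      rw [Nat.cast_one] at h
      omega
    have hs2 : crmStep n c (u + 1) (u + 1 + (c : ZMod n)) := CRM_step_chordO hp1
    have hp2 : (u + 1 + (c : ZMod n)).val % 2 = 0 := by
      have h := CRM_parity_addN hn2 (u + 1) c
      omega
    have ihw := ih (u + 1 + (c : ZMod n)) hp2
    have e2 : u + 1 + (c : ZMod n) + ((k + k*c : ℕ) : ZMod n)
        = u + (((k+1) + (k+1)*c : ℕ) : ZMod n) := by push_cast; ring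
    rw [e2] at ihw
    have e : 2*(k+1) = (2*k) + 1 + 1 := by ring
    rw [e]
    exact ⟨u + 1, CRM_step_one u, u + 1 + (c : ZMod n), hs2, ihw⟩

theorem CRM_walk_EMcore (hn2 : 2 ∣ n) (hc1 : c % 2 = 1) :
    ∀ (k : ℕ) (u : ZMod n), u.val % 2 = 0 →
    hasWalk (crmStep n c) (2*k+1) u (u + ((k : ℕ) : ZMod n) - (((k+1)*c : ℕ) : ZMod n)) := by
  intro k
  induction k with
  | zero =>
    intro u hu
    refine ⟨u - (c : ZMod n), CRM_step_chordE hn2 hc1 hu, ?_⟩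
    show u - (c : ZMod n) = u + ((0:ℕ) : ZMod n) - (((0+1)*c : ℕ) : ZMod n)
    push_cast; ring
  | succ k ih =>
    intro u hu
    have hp1 : (u - (c : ZMod n)).val % 2 = 1 := by
      have := CRM_parity_subN hn2 u c; omega
    have hp2 : (u - (c : ZMod n) + 1).val % 2 = 0 := by
      have h := CRM_parity_addN hn2 (u - (c : ZMod n)) 1
      rw [Nat.cast_one] at h; omega
    have ihw := ih (u - (c : ZMod n) + 1) hp2
    have e2 : u - (c : ZMod n) + 1 + ((k : ℕ) : ZMod n) - (((k+1)*c : ℕ) : ZMod n)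
        = u + (((k+1) : ℕ) : ZMod n) - ((((k+1)+1)*c : ℕ) : ZMod n) := by push_cast; ring
    rw [e2] at ihw
    have e : 2*(k+1)+1 = (2*k+1) + 1 + 1 := by ring
    rw [e]
    exact ⟨u - (c : ZMod n), CRM_step_chordE hn2 hc1 hu, u - (c : ZMod n) + 1,
      CRM_step_one _, ihw⟩

theorem CRM_walk_OPcore (hn2 : 2 ∣ n) (hc1 : c % 2 = 1) :
    ∀ (k : ℕ) (u : ZMod n), u.val % 2 = 1 →
    hasWalk (crmStep n c) (2*k+1) u (u + ((k : ℕ) : ZMod n) + (((k+1)*c : ℕ) : ZMod n)) := by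
  intro k
  induction k with
  | zero =>
    intro u hu
    refine ⟨u + (c : ZMod n), CRM_step_chordO hu, ?_⟩
    show u + (c : ZMod n) = u + ((0:ℕ) : ZMod n) + (((0+1)*c : ℕ) : ZMod n)
    push_cast; ring
  | succ k ih =>
    intro u hu
    have hp1 : (u + (c : ZMod n)).val % 2 = 0 := by
      have := CRM_parity_addN hn2 u c; omega
    have hp2 : (u + (c : ZMod n) + 1).val % 2 = 1 := by
      have h := CRM_parity_addN hn2 (u + (c : ZMod n)) 1
      rw [Nat.cast_one] at h; omega
    have ihw := ih (u + (c : ZMod n) + 1) hp2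
    have e2 : u + (c : ZMod n) + 1 + ((k : ℕ) : ZMod n) + (((k+1)*c : ℕ) : ZMod n)
        = u + (((k+1) : ℕ) : ZMod n) + ((((k+1)+1)*c : ℕ) : ZMod n) := by push_cast; ring
    rw [e2] at ihw
    have e : 2*(k+1)+1 = (2*k+1) + 1 + 1 := by ring
    rw [e]
    exact ⟨u + (c : ZMod n), CRM_step_chordO hu, u + (c : ZMod n) + 1, CRM_step_one _, ihw⟩

theorem CRM_walk_OMcore (hn2 : 2 ∣ n) (hc1 : c % 2 = 1) :
    ∀ (k : ℕ) (u : ZMod n), u.val % 2 = 1 →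
    hasWalk (crmStep n c) (2*k) u (u + ((k : ℕ) : ZMod n) - ((k*c : ℕ) : ZMod n)) := by
  intro k
  induction k with
  | zero => intro u _; show u = u + ((0:ℕ) : ZMod n) - ((0*c : ℕ) : ZMod n); simp
  | succ k ih =>
    intro u hu
    have hp1 : (u + 1 : ZMod n).val % 2 = 0 := by
      have h := CRM_parity_addN hn2 u 1
      rw [Nat.cast_one] at h; omega
    have hs2 : crmStep n c (u + 1) (u + 1 - (c : ZMod n)) := CRM_step_chordE hn2 hc1 hp1
    have hp2 : (u + 1 - (c : ZMod n)).val % 2 = 1 := by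
      have h := CRM_parity_subN hn2 (u + 1) c
      omega
    have ihw := ih (u + 1 - (c : ZMod n)) hp2
    have e2 : u + 1 - (c : ZMod n) + ((k : ℕ) : ZMod n) - ((k*c : ℕ) : ZMod n)
        = u + (((k+1) : ℕ) : ZMod n) - (((k+1)*c : ℕ) : ZMod n) := by push_cast; ring
    rw [e2] at ihw
    have e : 2*(k+1) = (2*k) + 1 + 1 := by ring
    rw [e]
    exact ⟨u + 1, CRM_step_one u, u + 1 - (c : ZMod n), hs2, ihw⟩

theorem CRM_walk_EP (hn2 : 2 ∣ n) (hc1 : c % 2 = 1) {u : ZMod n} (hu : u.val % 2 = 0)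
    {k s : ℕ} (hks : k ≤ s) :
    hasWalk (crmStep n c) (s + k) u (u + ((s : ℕ) : ZMod n) + ((k*c : ℕ) : ZMod n)) := by
  have h1 := CRM_walk_EPcore hn2 hc1 k u hu
  have h2 := CRM_walk_units (c := c) (s - k) (u + ((k + k*c : ℕ) : ZMod n))
  have h3 := CRM_walk_append _ h1 h2
  have e1 : 2*k + (s - k) = s + k := by omega
  have e2 : u + ((k + k*c : ℕ) : ZMod n) + ((s - k : ℕ) : ZMod n)
      = u + ((s : ℕ) : ZMod n) + ((k*c : ℕ) : ZMod n) := by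
    rw [Nat.cast_sub hks]; push_cast; ring
  rw [e1, e2] at h3; exact h3

theorem CRM_walk_EM (hn2 : 2 ∣ n) (hc1 : c % 2 = 1) {u : ZMod n} (hu : u.val % 2 = 0)
    {k s : ℕ} (hk : 1 ≤ k) (hks : k - 1 ≤ s) :
    hasWalk (crmStep n c) (s + k) u (u + ((s : ℕ) : ZMod n) - ((k*c : ℕ) : ZMod n)) := by
  obtain ⟨k', rfl⟩ : ∃ k', k = k' + 1 := ⟨k - 1, by omega⟩
  have h1 := CRM_walk_EMcore hn2 hc1 k' u hu
  have h2 := CRM_walk_units (c := c) (s - k') (u + ((k' : ℕ) : ZMod n) - (((k'+1)*c : ℕ) : ZMod n))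
  have h3 := CRM_walk_append _ h1 h2
  have e1 : 2*k'+1 + (s - k') = s + (k' + 1) := by omega
  have e2 : u + ((k' : ℕ) : ZMod n) - (((k'+1)*c : ℕ) : ZMod n) + ((s - k' : ℕ) : ZMod n)
      = u + ((s : ℕ) : ZMod n) - (((k'+1)*c : ℕ) : ZMod n) := by
    rw [Nat.cast_sub (by omega : k' ≤ s)]; push_cast; ring
  rw [e1, e2] at h3; exact h3

theorem CRM_walk_OP (hn2 : 2 ∣ n) (hc1 : c % 2 = 1) {u : ZMod n} (hu : u.val % 2 = 1)
    {k s : ℕ} (hk : 1 ≤ k) (hks : k - 1 ≤ s) :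
    hasWalk (crmStep n c) (s + k) u (u + ((s : ℕ) : ZMod n) + ((k*c : ℕ) : ZMod n)) := by
  obtain ⟨k', rfl⟩ : ∃ k', k = k' + 1 := ⟨k - 1, by omega⟩
  have h1 := CRM_walk_OPcore hn2 hc1 k' u hu
  have h2 := CRM_walk_units (c := c) (s - k') (u + ((k' : ℕ) : ZMod n) + (((k'+1)*c : ℕ) : ZMod n))
  have h3 := CRM_walk_append _ h1 h2
  have e1 : 2*k'+1 + (s - k') = s + (k' + 1) := by omega
  have e2 : u + ((k' : ℕ) : ZMod n) + (((k'+1)*c : ℕ) : ZMod n) + ((s - k' : ℕ) : ZMod n)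
      = u + ((s : ℕ) : ZMod n) + (((k'+1)*c : ℕ) : ZMod n) := by
    rw [Nat.cast_sub (by omega : k' ≤ s)]; push_cast; ring
  rw [e1, e2] at h3; exact h3

theorem CRM_walk_OM (hn2 : 2 ∣ n) (hc1 : c % 2 = 1) {u : ZMod n} (hu : u.val % 2 = 1)
    {k s : ℕ} (hks : k ≤ s) :
    hasWalk (crmStep n c) (s + k) u (u + ((s : ℕ) : ZMod n) - ((k*c : ℕ) : ZMod n)) := by
  have h1 := CRM_walk_OMcore hn2 hc1 k u hu
  have h2 := CRM_walk_units (c := c) (s - k) (u + ((k : ℕ) : ZMod n) - ((k*c : ℕ) : ZMod n))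
  have h3 := CRM_walk_append _ h1 h2
  have e1 : 2*k + (s - k) = s + k := by omega
  have e2 : u + ((k : ℕ) : ZMod n) - ((k*c : ℕ) : ZMod n) + ((s - k : ℕ) : ZMod n)
      = u + ((s : ℕ) : ZMod n) - ((k*c : ℕ) : ZMod n) := by
    rw [Nat.cast_sub hks]; push_cast; ring
  rw [e1, e2] at h3; exact h3

theorem CRM_walk_decomp (hn2 : 2 ∣ n) (hc1 : c % 2 = 1) :
    ∀ (d : ℕ) (u v : ZMod n), hasWalk (crmStep n c) d u v →
    ∃ s a b : ℕ, s + a + b = d ∧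
      (u.val % 2 = 0 → 2*a ≤ d ∧ 2*b ≤ d + 1) ∧
      (u.val % 2 = 1 → 2*a ≤ d + 1 ∧ 2*b ≤ d) ∧
      v = u + ((s : ℕ) : ZMod n) + ((a : ℕ) : ZMod n) * (c : ZMod n)
            - ((b : ℕ) : ZMod n) * (c : ZMod n) := by
  intro d
  induction d with
  | zero =>
    intro u v h
    have hq : u = v := h
    subst hq
    exact ⟨0, 0, 0, rfl, by omega, by omega, by simp⟩
  | succ d ih =>
    intro u v h
    obtain ⟨w, hs, hw⟩ := h
    obtain ⟨s, a, b, hsum, hE, hO, hv⟩ := ih w v hw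
    rcases hs with hedge | harc
    · rcases hedge with ⟨hu1, hwe⟩ | ⟨hw1, hue⟩
      · -- u odd, w = u + c
        subst hwe
        have hpw : (u + (c : ZMod n)).val % 2 = 0 := by
          have := CRM_parity_addN hn2 u c; omega
        refine ⟨s, a+1, b, by omega, ?_, ?_, ?_⟩
        · intro h0; omega
        · intro _
          have := hE hpw
          omega
        · rw [hv]; push_cast; ring
      · -- w odd, u = w + c
        subst hue
        have hpu : (w + (c : ZMod n)).val % 2 = 0 := by
          have := CRM_parity_addN hn2 w c; omega
        refine ⟨s, a, b+1, by omega, ?_, ?_, ?_⟩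
        · intro _
          have := hO hw1
          omega
        · intro h1; omega
        · rw [hv]; push_cast; ring
    · -- arc, w = u + 1
      subst harc
      have hpw : (u + 1 : ZMod n).val % 2 = (u.val + 1) % 2 := by
        have h := CRM_parity_addN hn2 u 1
        rwa [Nat.cast_one] at h
      refine ⟨s+1, a, b, by omega, ?_, ?_, ?_⟩
      · intro h0
        have := hO (by omega)
        omega
      · intro h1
        have := hE (by omega)
        omega
      · rw [hv]; push_cast; ring

end CRMAux
set_option maxHeartbeats 1000000 in
/-- For every $t ≥ 1$, the chordal ring mixed graph $CRM(8t^2+2, (2t-1)^2+2t)$ has diameter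
exactly $k = 4t$; its order is $n = 8t^2+2 = k^2/2+2$ and its chord length is
$c = (2t-1)^2+2t = (k/2-1)^2+k/2$. -/
theorem CRM_diameter_four_t (t : ℕ) (ht : 1 ≤ t) :
    8 * t ^ 2 + 2 = (4 * t) ^ 2 / 2 + 2 ∧
    (2 * t - 1) ^ 2 + 2 * t = ((4 * t) / 2 - 1) ^ 2 + (4 * t) / 2 ∧
    (∀ u v : ZMod (8 * t ^ 2 + 2),
      ∃ d ≤ 4 * t, hasWalk (crmStep (8 * t ^ 2 + 2) ((2 * t - 1) ^ 2 + 2 * t)) d u v) ∧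
    (∃ u v : ZMod (8 * t ^ 2 + 2),
      ∀ d < 4 * t, ¬ hasWalk (crmStep (8 * t ^ 2 + 2) ((2 * t - 1) ^ 2 + 2 * t)) d u v) := by
  obtain ⟨N, hNdef⟩ : ∃ x, 8 * t ^ 2 + 2 = x := ⟨_, rfl⟩
  obtain ⟨C, hCdef⟩ : ∃ x, (2 * t - 1) ^ 2 + 2 * t = x := ⟨_, rfl⟩
  rw [hNdef, hCdef]
  haveI : NeZero N := ⟨by omega⟩
  have hCval : C + 2 * t = 4 * t ^ 2 + 1 := by
    rw [← hCdef]
    obtain ⟨r, hr⟩ : ∃ r, t = r + 1 := ⟨t - 1, by omega⟩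
    subst hr
    rw [show 2 * (r + 1) - 1 = 2 * r + 1 from by omega]
    ring
  have h2C : 2 * C + 4 * t = N := by omega
  have hC1 : C % 2 = 1 := by omega
  have hN2 : 2 ∣ N := ⟨4 * t ^ 2 + 1, by omega⟩
  have hNz : (N : ℤ) = 8 * (t : ℤ) ^ 2 + 2 := by rw [← hNdef]; push_cast; ring
  have hCz : (C : ℤ) = 4 * (t : ℤ) ^ 2 - 2 * (t : ℤ) + 1 := by
    have h := hCval
    zify at h
    linarith
  have htz : (1 : ℤ) ≤ (t : ℤ) := by exact_mod_cast ht
  refine ⟨?_, ?_, ?_, ?_⟩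
  · rw [← hNdef, show (4 * t) ^ 2 = 2 * (8 * t ^ 2) from by ring,
      Nat.mul_div_cancel_left _ (by norm_num : 0 < 2)]
  · rw [← hCdef, show (4 * t) / 2 = 2 * t from by omega]
  · -- upper bound: diameter ≤ 4t
    intro u v
    set R := (v - u).val with hRdef
    have hvR : v = u + ((R : ℕ) : ZMod N) := by
      rw [hRdef, ZMod.natCast_val, ZMod.cast_id]; ring
    have hRlt : R < N := ZMod.val_lt _
    have cast_key : ∀ x y q : ℕ, (x : ℤ) = (y : ℤ) + (q : ℤ) * (N : ℤ) →
        ((x : ℕ) : ZMod N) = ((y : ℕ) : ZMod N) := by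
      intro x y q hxy
      have h2 : ((x : ℤ) : ZMod N) = (((y : ℤ) + (q : ℤ) * (N : ℤ) : ℤ) : ZMod N) := by
        rw [hxy]
      push_cast at h2
      rw [ZMod.natCast_self] at h2
      simpa using h2
    have finP0 : ∀ k s q : ℕ, u.val % 2 = 0 → k ≤ s → s + k ≤ 4 * t →
        ((s : ℤ) + (k : ℤ) * (C : ℤ) = (R : ℤ) + (q : ℤ) * (N : ℤ)) →
        ∃ d ≤ 4 * t, hasWalk (crmStep N C) d u v := by
      intro k s q hu hks hd hid
      refine ⟨s + k, hd, ?_⟩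
      have hw := CRM_walk_EP hN2 hC1 hu hks
      have hcast := cast_key (s + k * C) R q (by push_cast; linarith)
      have he : u + ((s : ℕ) : ZMod N) + ((k * C : ℕ) : ZMod N) = v := by
        rw [hvR]
        have e3 : u + ((s : ℕ) : ZMod N) + ((k * C : ℕ) : ZMod N)
            = u + (((s + k * C : ℕ)) : ZMod N) := by push_cast; ring
        rw [e3, hcast]
      rwa [he] at hw
    have finM0 : ∀ k s q : ℕ, u.val % 2 = 0 → 1 ≤ k → k - 1 ≤ s → s + k ≤ 4 * t →
        ((R : ℤ) + (k : ℤ) * (C : ℤ) = (s : ℤ) + (q : ℤ) * (N : ℤ)) →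
        ∃ d ≤ 4 * t, hasWalk (crmStep N C) d u v := by
      intro k s q hu hk hks hd hid
      refine ⟨s + k, hd, ?_⟩
      have hw := CRM_walk_EM hN2 hC1 hu hk hks
      have hcast := cast_key (R + k * C) s q (by push_cast; linarith)
      have he : u + ((s : ℕ) : ZMod N) - ((k * C : ℕ) : ZMod N) = v := by
        rw [hvR]
        have h5 : ((R + k * C : ℕ) : ZMod N) = ((s : ℕ) : ZMod N) := hcast
        push_cast at h5 ⊢
        rw [← h5]; ring
      rwa [he] at hw
    have finP1 : ∀ k s q : ℕ, u.val % 2 = 1 → 1 ≤ k → k - 1 ≤ s → s + k ≤ 4 * t →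
        ((s : ℤ) + (k : ℤ) * (C : ℤ) = (R : ℤ) + (q : ℤ) * (N : ℤ)) →
        ∃ d ≤ 4 * t, hasWalk (crmStep N C) d u v := by
      intro k s q hu hk hks hd hid
      refine ⟨s + k, hd, ?_⟩
      have hw := CRM_walk_OP hN2 hC1 hu hk hks
      have hcast := cast_key (s + k * C) R q (by push_cast; linarith)
      have he : u + ((s : ℕ) : ZMod N) + ((k * C : ℕ) : ZMod N) = v := by
        rw [hvR]
        have e3 : u + ((s : ℕ) : ZMod N) + ((k * C : ℕ) : ZMod N)
            = u + (((s + k * C : ℕ)) : ZMod N) := by push_cast; ring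
        rw [e3, hcast]
      rwa [he] at hw
    have finM1 : ∀ k s q : ℕ, u.val % 2 = 1 → k ≤ s → s + k ≤ 4 * t →
        ((R : ℤ) + (k : ℤ) * (C : ℤ) = (s : ℤ) + (q : ℤ) * (N : ℤ)) →
        ∃ d ≤ 4 * t, hasWalk (crmStep N C) d u v := by
      intro k s q hu hks hd hid
      refine ⟨s + k, hd, ?_⟩
      have hw := CRM_walk_OM hN2 hC1 hu hks
      have hcast := cast_key (R + k * C) s q (by push_cast; linarith)
      have he : u + ((s : ℕ) : ZMod N) - ((k * C : ℕ) : ZMod N) = v := by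
        rw [hvR]
        have h5 : ((R + k * C : ℕ) : ZMod N) = ((s : ℕ) : ZMod N) := hcast
        push_cast at h5 ⊢
        rw [← h5]; ring
      rwa [he] at hw
    rcases Nat.eq_zero_or_pos R with hR0 | hRpos
    · refine ⟨0, by omega, ?_⟩
      show u = v
      rw [hvR, hR0]; simp
    rcases Nat.mod_two_eq_zero_or_one u.val with hu | hu
    · -- u even
      rcases le_or_gt R (4 * t ^ 2 + 2 * t) with hlow | hhigh
      · -- lower half
        obtain ⟨m, s0, hms, hs0lt⟩ : ∃ m s0, 4 * t * m + s0 = R ∧ s0 < 4 * t :=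
          ⟨R / (4 * t), R % (4 * t), Nat.div_add_mod R (4 * t), Nat.mod_lt _ (by omega)⟩
        have hRz : (R : ℤ) = 4 * (t : ℤ) * (m : ℤ) + (s0 : ℤ) := by exact_mod_cast hms.symm
        have hmt : m ≤ t := by
          by_contra hcon
          push_neg at hcon
          have h6 : 4 * t * (t + 1) ≤ 4 * t * m := Nat.mul_le_mul_left _ hcon
          have h7 : 4 * t * (t + 1) = 4 * t ^ 2 + 4 * t := by ring
          omega
        by_cases hA : 1 ≤ m ∧ s0 ≤ 2 * m
        · -- case E1
          obtain ⟨e, he⟩ : ∃ e, m + e = t := ⟨t - m, by omega⟩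
          obtain ⟨s, hs⟩ : ∃ s, s + 1 = s0 + 2 * t := ⟨s0 + 2 * t - 1, by omega⟩
          have hez : (e : ℤ) = (t : ℤ) - (m : ℤ) := by omega
          have hsz : (s : ℤ) = (s0 : ℤ) + 2 * (t : ℤ) - 1 := by omega
          refine finP0 (2 * e + 1) s e hu (by omega) (by omega) ?_
          push_cast
          rw [hsz, hez, hCz, hNz, hRz]; ring
        · by_cases hB : s0 + 2 * m ≤ 4 * t
          · rcases Nat.eq_zero_or_pos m with hm0 | hm1
            · subst hm0
              refine finP0 0 s0 0 hu (by omega) (by omega) ?_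
              push_cast
              rw [hRz]; push_cast; ring
            · -- case E2
              refine finM0 (2 * m) s0 m hu (by omega) (by omega) (by omega) ?_
              push_cast
              rw [hRz, hCz, hNz]; ring
          · -- case E3
            have hm1t : m + 1 ≤ t := by
              by_contra hcon
              push_neg at hcon
              have hmt' : m = t := by omega
              rw [hmt'] at hms
              have h9 : 4 * t * t = 4 * t ^ 2 := by ring
              omega
            obtain ⟨e, he⟩ : ∃ e, m + 1 + e = t := ⟨t - m - 1, by omega⟩
            obtain ⟨s, hs⟩ : ∃ s, s + (2 * t + 1) = s0 := ⟨s0 - (2 * t + 1), by omega⟩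
            have hez : (e : ℤ) = (t : ℤ) - (m : ℤ) - 1 := by omega
            have hsz : (s : ℤ) = (s0 : ℤ) - (2 * (t : ℤ) + 1) := by omega
            refine finP0 (2 * e + 1) s e hu (by omega) (by omega) ?_
            push_cast
            rw [hsz, hez, hCz, hNz, hRz]; ring
      · -- upper half
        obtain ⟨R', hR'⟩ : ∃ R', R + R' = N := ⟨N - R, by omega⟩
        obtain ⟨p, s0, hps, hs0lt⟩ : ∃ p s0, 4 * t * p + s0 = R' ∧ s0 < 4 * t :=
          ⟨R' / (4 * t), R' % (4 * t), Nat.div_add_mod R' (4 * t), Nat.mod_lt _ (by omega)⟩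
        have hR'ub : R' + 2 * t ≤ 4 * t ^ 2 + 1 := by omega
        have hpt : p + 1 ≤ t := by
          by_contra hcon
          push_neg at hcon
          have h6 : 4 * t * t ≤ 4 * t * p := Nat.mul_le_mul_left _ (by omega)
          have h7 : 4 * t * t = 4 * t ^ 2 := by ring
          omega
        have hRz : (R : ℤ) = (N : ℤ) - 4 * (t : ℤ) * (p : ℤ) - (s0 : ℤ) := by
          have h8 : R + (4 * t * p + s0) = N := by omega
          have h8z : (R : ℤ) + (4 * (t : ℤ) * (p : ℤ) + (s0 : ℤ)) = (N : ℤ) := by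
            exact_mod_cast h8
          linarith
        by_cases hA : s0 ≤ 2 * p + 3
        · -- case E4
          obtain ⟨e, he⟩ : ∃ e, p + 1 + e = t := ⟨t - p - 1, by omega⟩
          obtain ⟨s, hs⟩ : ∃ s, s + s0 = 2 * t + 1 := ⟨2 * t + 1 - s0, by omega⟩
          have hez : (e : ℤ) = (t : ℤ) - (p : ℤ) - 1 := by omega
          have hsz : (s : ℤ) = 2 * (t : ℤ) + 1 - (s0 : ℤ) := by omega
          refine finM0 (2 * e + 1) s (e + 1) hu (by omega) (by omega) (by omega) ?_
          push_cast
          rw [hsz, hez, hCz, hRz, hNz]; ring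
        · by_cases hB : s0 + 2 * p + 2 ≤ 4 * t
          · -- case E5
            obtain ⟨s, hs⟩ : ∃ s, s + s0 = 4 * t := ⟨4 * t - s0, by omega⟩
            have hsz : (s : ℤ) = 4 * (t : ℤ) - (s0 : ℤ) := by omega
            refine finP0 (2 * p + 2) s p hu (by omega) (by omega) ?_
            push_cast
            rw [hsz, hCz, hRz, hNz]; ring
          · -- case E6
            have hpt2 : p + 2 ≤ t := by
              by_contra hcon
              push_neg at hcon
              have hpt' : p + 1 = t := by omega
              have h9 : 4 * t * p + 4 * t = 4 * t ^ 2 := by rw [← hpt']; ring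
              omega
            obtain ⟨e, he⟩ : ∃ e, p + 2 + e = t := ⟨t - p - 2, by omega⟩
            obtain ⟨s, hs⟩ : ∃ s, s + s0 = 6 * t + 1 := ⟨6 * t + 1 - s0, by omega⟩
            have hez : (e : ℤ) = (t : ℤ) - (p : ℤ) - 2 := by omega
            have hsz : (s : ℤ) = 6 * (t : ℤ) + 1 - (s0 : ℤ) := by omega
            refine finM0 (2 * e + 1) s (e + 1) hu (by omega) (by omega) (by omega) ?_
            push_cast
            rw [hsz, hez, hCz, hRz, hNz]; ring
    · -- u odd
      rcases le_or_gt R (4 * t ^ 2 + 2 * t) with hlow | hhigh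
      · -- lower half
        obtain ⟨m, s0, hms, hs0lt⟩ : ∃ m s0, 4 * t * m + s0 = R ∧ s0 < 4 * t :=
          ⟨R / (4 * t), R % (4 * t), Nat.div_add_mod R (4 * t), Nat.mod_lt _ (by omega)⟩
        have hRz : (R : ℤ) = 4 * (t : ℤ) * (m : ℤ) + (s0 : ℤ) := by exact_mod_cast hms.symm
        have hmt : m ≤ t := by
          by_contra hcon
          push_neg at hcon
          have h6 : 4 * t * (t + 1) ≤ 4 * t * m := Nat.mul_le_mul_left _ hcon
          have h7 : 4 * t * (t + 1) = 4 * t ^ 2 + 4 * t := by ring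
          omega
        by_cases hA : 1 ≤ m ∧ s0 + 1 ≤ 2 * m
        · -- case O1
          obtain ⟨e, he⟩ : ∃ e, m + e = t := ⟨t - m, by omega⟩
          obtain ⟨s, hs⟩ : ∃ s, s + 1 = s0 + 2 * t := ⟨s0 + 2 * t - 1, by omega⟩
          have hez : (e : ℤ) = (t : ℤ) - (m : ℤ) := by omega
          have hsz : (s : ℤ) = (s0 : ℤ) + 2 * (t : ℤ) - 1 := by omega
          refine finP1 (2 * e + 1) s e hu (by omega) (by omega) (by omega) ?_
          push_cast
          rw [hsz, hez, hCz, hNz, hRz]; ring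
        · by_cases hB : s0 + 2 * m ≤ 4 * t
          · -- case O2
            refine finM1 (2 * m) s0 m hu (by omega) (by omega) ?_
            push_cast
            rw [hRz, hCz, hNz]; ring
          · -- case O3
            have hm1t : m + 1 ≤ t := by
              by_contra hcon
              push_neg at hcon
              have hmt' : m = t := by omega
              rw [hmt'] at hms
              have h9 : 4 * t * t = 4 * t ^ 2 := by ring
              omega
            obtain ⟨e, he⟩ : ∃ e, m + 1 + e = t := ⟨t - m - 1, by omega⟩
            obtain ⟨s, hs⟩ : ∃ s, s + (2 * t + 1) = s0 := ⟨s0 - (2 * t + 1), by omega⟩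
            have hez : (e : ℤ) = (t : ℤ) - (m : ℤ) - 1 := by omega
            have hsz : (s : ℤ) = (s0 : ℤ) - (2 * (t : ℤ) + 1) := by omega
            refine finP1 (2 * e + 1) s e hu (by omega) (by omega) (by omega) ?_
            push_cast
            rw [hsz, hez, hCz, hNz, hRz]; ring
      · -- upper half
        obtain ⟨R', hR'⟩ : ∃ R', R + R' = N := ⟨N - R, by omega⟩
        obtain ⟨p, s0, hps, hs0lt⟩ : ∃ p s0, 4 * t * p + s0 = R' ∧ s0 < 4 * t :=
          ⟨R' / (4 * t), R' % (4 * t), Nat.div_add_mod R' (4 * t), Nat.mod_lt _ (by omega)⟩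
        have hR'ub : R' + 2 * t ≤ 4 * t ^ 2 + 1 := by omega
        have hpt : p + 1 ≤ t := by
          by_contra hcon
          push_neg at hcon
          have h6 : 4 * t * t ≤ 4 * t * p := Nat.mul_le_mul_left _ (by omega)
          have h7 : 4 * t * t = 4 * t ^ 2 := by ring
          omega
        have hRz : (R : ℤ) = (N : ℤ) - 4 * (t : ℤ) * (p : ℤ) - (s0 : ℤ) := by
          have h8 : R + (4 * t * p + s0) = N := by omega
          have h8z : (R : ℤ) + (4 * (t : ℤ) * (p : ℤ) + (s0 : ℤ)) = (N : ℤ) := by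
            exact_mod_cast h8
          linarith
        by_cases hA : s0 ≤ 2 * p + 2
        · -- case O4
          obtain ⟨e, he⟩ : ∃ e, p + 1 + e = t := ⟨t - p - 1, by omega⟩
          obtain ⟨s, hs⟩ : ∃ s, s + s0 = 2 * t + 1 := ⟨2 * t + 1 - s0, by omega⟩
          have hez : (e : ℤ) = (t : ℤ) - (p : ℤ) - 1 := by omega
          have hsz : (s : ℤ) = 2 * (t : ℤ) + 1 - (s0 : ℤ) := by omega
          refine finM1 (2 * e + 1) s (e + 1) hu (by omega) (by omega) ?_
          push_cast
          rw [hsz, hez, hCz, hRz, hNz]; ring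
        · by_cases hB : s0 + 2 * p + 1 ≤ 4 * t
          · -- case O5
            obtain ⟨s, hs⟩ : ∃ s, s + s0 = 4 * t := ⟨4 * t - s0, by omega⟩
            have hsz : (s : ℤ) = 4 * (t : ℤ) - (s0 : ℤ) := by omega
            refine finP1 (2 * p + 2) s p hu (by omega) (by omega) (by omega) ?_
            push_cast
            rw [hsz, hCz, hRz, hNz]; ring
          · -- case O6
            have hpt2 : p + 2 ≤ t := by
              by_contra hcon
              push_neg at hcon
              have hpt' : p + 1 = t := by omega
              have h9 : 4 * t * p + 4 * t = 4 * t ^ 2 := by rw [← hpt']; ring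
              omega
            obtain ⟨e, he⟩ : ∃ e, p + 2 + e = t := ⟨t - p - 2, by omega⟩
            obtain ⟨s, hs⟩ : ∃ s, s + s0 = 6 * t + 1 := ⟨6 * t + 1 - s0, by omega⟩
            have hez : (e : ℤ) = (t : ℤ) - (p : ℤ) - 2 := by omega
            have hsz : (s : ℤ) = 6 * (t : ℤ) + 1 - (s0 : ℤ) := by omega
            refine finM1 (2 * e + 1) s (e + 1) hu (by omega) (by omega) ?_
            push_cast
            rw [hsz, hez, hCz, hRz, hNz]; ring
  · -- lower bound : some pair at distance ≥ 4t
    refine ⟨0, ((4 * t ^ 2 + 2 * t : ℕ) : ZMod N), ?_⟩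
    intro d hd hwalk
    have hu0 : (0 : ZMod N).val % 2 = 0 := by rw [ZMod.val_zero]
    obtain ⟨s, a, b, hsum, hE, _, hv⟩ := CRM_walk_decomp hN2 hC1 d 0 _ hwalk
    obtain ⟨ha2, hb2⟩ := hE hu0
    have hv2 : (((4 * t ^ 2 + 2 * t : ℕ)) : ZMod N)
        = ((s : ℕ) : ZMod N) + ((a : ℕ) : ZMod N) * ((C : ℕ) : ZMod N)
          - ((b : ℕ) : ZMod N) * ((C : ℕ) : ZMod N) := by
      rw [hv]; ring
    have hdvd : (N : ℤ) ∣ ((s : ℤ) + (a : ℤ) * (C : ℤ) - (b : ℤ) * (C : ℤ)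
        - (4 * (t : ℤ) ^ 2 + 2 * (t : ℤ))) := by
      apply (ZMod.intCast_zmod_eq_zero_iff_dvd _ _).mp
      push_cast
      push_cast at hv2
      linear_combination -hv2
    obtain ⟨L, hL⟩ := hdvd
    have h2Cz : 2 * (C : ℤ) = (N : ℤ) - 4 * (t : ℤ) := by rw [hCz, hNz]; ring
    have hS : (0 : ℤ) ≤ (s : ℤ) := by positivity
    have hA0 : (0 : ℤ) ≤ (a : ℤ) := by positivity
    have hB0 : (0 : ℤ) ≤ (b : ℤ) := by positivity
    have hDn : s + a + b + 1 ≤ 4 * t := by omega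
    have hD : (s : ℤ) + (a : ℤ) + (b : ℤ) ≤ 4 * (t : ℤ) - 1 := by
      have := hDn; zify at this; linarith
    have hA2 : 2 * (a : ℤ) ≤ 4 * (t : ℤ) - 1 := by
      have h10 : 2 * a + 1 ≤ 4 * t := by omega
      zify at h10; linarith
    obtain ⟨w, hw | hw⟩ := Int.even_or_odd' ((a : ℤ) - (b : ℤ))
    · -- a - b = 2w
      have key : (s : ℤ) = 4 * (t : ℤ) ^ 2 + 2 * (t : ℤ) + 4 * (t : ℤ) * w
          + (L - w) * (8 * (t : ℤ) ^ 2 + 2) := by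
        linear_combination hL - (C : ℤ) * hw - w * h2Cz + (L - w) * hNz
      have hwub : 2 * w ≤ 4 * (t : ℤ) - 1 := by linarith
      have hwlb : -(4 * (t : ℤ) - 1) ≤ 2 * w := by linarith
      rcases le_or_gt 1 (L - w) with hM | hM
      · have hp1 : (t : ℤ) * (-(4 * (t : ℤ) - 1)) ≤ (t : ℤ) * (2 * w) :=
          mul_le_mul_of_nonneg_left hwlb (by positivity)
        have hp2 : (0 : ℤ) ≤ (L - w - 1) * (8 * (t : ℤ) ^ 2 + 2) :=
          mul_nonneg (by linarith) (by positivity)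
        linarith [key, hp1, hp2, hD, hS, sq_nonneg (t : ℤ)]
      rcases le_or_gt (L - w) (-2) with hM2 | hM2
      · have hp1 : (t : ℤ) * (2 * w) ≤ (t : ℤ) * (4 * (t : ℤ) - 1) :=
          mul_le_mul_of_nonneg_left hwub (by positivity)
        have hp2 : (L - w) * (8 * (t : ℤ) ^ 2 + 2) ≤ (-2) * (8 * (t : ℤ) ^ 2 + 2) :=
          mul_le_mul_of_nonneg_right hM2 (by positivity)
        linarith [key, hp1, hp2, hS, sq_nonneg (t : ℤ), htz]
      · have hM01 : L - w = 0 ∨ L - w = -1 := by omega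
        rcases hM01 with hM0 | hMm1
        · have key0 : (s : ℤ) = 4 * (t : ℤ) ^ 2 + 2 * (t : ℤ) + 4 * (t : ℤ) * w := by
            rw [hM0] at key; linarith
          have hwt : (0 : ℤ) ≤ w + (t : ℤ) := by
            by_contra hcon
            push_neg at hcon
            have hle : w ≤ -(t : ℤ) - 1 := by linarith
            have hp : (t : ℤ) * w ≤ (t : ℤ) * (-(t : ℤ) - 1) :=
              mul_le_mul_of_nonneg_left hle (by positivity)
            linarith [key0, hp, hS, htz]
          have hp : (0 : ℤ) ≤ (w + (t : ℤ)) * (4 * (t : ℤ) - 2) :=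
            mul_nonneg hwt (by linarith)
          linarith [key0, hp, hD, hw, hA0, hS]
        · have key1 : (s : ℤ) = 4 * (t : ℤ) * w - 4 * (t : ℤ) ^ 2 + 2 * (t : ℤ) - 2 := by
            rw [hMm1] at key; linarith
          have hwt : (t : ℤ) ≤ w := by
            by_contra hcon
            push_neg at hcon
            have hle : w ≤ (t : ℤ) - 1 := by linarith
            have hp : (t : ℤ) * w ≤ (t : ℤ) * ((t : ℤ) - 1) :=
              mul_le_mul_of_nonneg_left hle (by positivity)
            linarith [key1, hp, hS, htz]
          linarith [hw, hwt, hA2, hB0]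
    · -- a - b = 2w + 1
      have key : (s : ℤ) = 4 * (t : ℤ) - 1 + 4 * (t : ℤ) * w
          + (L - w) * (8 * (t : ℤ) ^ 2 + 2) := by
        linear_combination hL - (C : ℤ) * hw - w * h2Cz + (L - w) * hNz - hCz
      have hwub : (w : ℤ) ≤ 2 * (t : ℤ) - 1 := by linarith
      have hwlb : -(2 * (t : ℤ)) ≤ w := by linarith
      rcases le_or_gt 1 (L - w) with hM | hM
      · have hp1 : (t : ℤ) * (-(2 * (t : ℤ))) ≤ (t : ℤ) * w :=
          mul_le_mul_of_nonneg_left hwlb (by positivity)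
        have hp2 : (0 : ℤ) ≤ (L - w - 1) * (8 * (t : ℤ) ^ 2 + 2) :=
          mul_nonneg (by linarith) (by positivity)
        linarith [key, hp1, hp2, hD, hA0, hB0, hS]
      rcases le_or_gt (L - w) (-2) with hM2 | hM2
      · have hp1 : (t : ℤ) * w ≤ (t : ℤ) * (2 * (t : ℤ) - 1) :=
          mul_le_mul_of_nonneg_left hwub (by positivity)
        have hp2 : (L - w) * (8 * (t : ℤ) ^ 2 + 2) ≤ (-2) * (8 * (t : ℤ) ^ 2 + 2) :=
          mul_le_mul_of_nonneg_right hM2 (by positivity)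
        linarith [key, hp1, hp2, hS, sq_nonneg (t : ℤ), htz]
      · have hM01 : L - w = 0 ∨ L - w = -1 := by omega
        rcases hM01 with hM0 | hMm1
        · have key0 : (s : ℤ) = 4 * (t : ℤ) - 1 + 4 * (t : ℤ) * w := by
            rw [hM0] at key; linarith
          have hw0 : (0 : ℤ) ≤ w := by
            by_contra hcon
            push_neg at hcon
            have hle : w ≤ -1 := by linarith
            have hp : (t : ℤ) * w ≤ (t : ℤ) * (-1) :=
              mul_le_mul_of_nonneg_left hle (by positivity)
            linarith [key0, hp, hS, htz]
          have hp : (0 : ℤ) ≤ (t : ℤ) * w := mul_nonneg (by positivity) hw0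
          linarith [key0, hp, hD, hw, hB0, hw0]
        · have key1 : (s : ℤ) = 4 * (t : ℤ) * w - 8 * (t : ℤ) ^ 2 + 4 * (t : ℤ) - 3 := by
            rw [hMm1] at key; linarith
          have hp : (t : ℤ) * w ≤ (t : ℤ) * (2 * (t : ℤ) - 1) :=
            mul_le_mul_of_nonneg_left hwub (by positivity)
          linarith [key1, hp, hS, htz]
end

section
/- For every integer t ≥ 1, setting k = 8t−2, the chordal ring mixed graph CRM(n, c) with n = k(k/2−1)+4 = 32t²−24t+8 and c = 8t²−8t+3 = (k+2)²/8 − k + 1 has diameter exactly k. -/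
set_option linter.unusedSectionVars false

namespace CRMaux

theorem hasWalk_trans {V : Type*} {st : V → V → Prop} :
    ∀ {d₁ : ℕ} {d₂ : ℕ} {u w v : V}, hasWalk st d₁ u w → hasWalk st d₂ w v →
      hasWalk st (d₁ + d₂) u v := by
  intro d₁
  induction d₁ with
  | zero => intro d₂ u w v h1 h2; cases h1; simpa using h2
  | succ e ih =>
    intro d₂ u w v h1 h2
    obtain ⟨x, hx, hxw⟩ := h1
    have : e + 1 + d₂ = (e + d₂) + 1 := by omega
    rw [this]
    exact ⟨x, hx, ih hxw h2⟩

section general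

variable {n c : ℕ} [NeZero n]

theorem val_add_parity (hn2 : 2 ∣ n) (x y : ZMod n) :
    (x + y).val % 2 = (x.val + y.val) % 2 := by
  rw [ZMod.val_add, Nat.mod_mod_of_dvd _ hn2]

theorem step_arc (u : ZMod n) : crmStep n c u (u + 1) := Or.inr rfl

theorem step_up {u : ZMod n} (hu : u.val % 2 = 1) : crmStep n c u (u + c) :=
  Or.inl (Or.inl ⟨hu, rfl⟩)

theorem step_down (hn2 : 2 ∣ n) (hcn : c < n) (hco : c % 2 = 1) {u : ZMod n}
    (hu : u.val % 2 = 0) : crmStep n c u (u - c) := by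
  refine Or.inl (Or.inr ⟨?_, by ring⟩)
  have h := val_add_parity hn2 (u - c) (c : ZMod n)
  rw [sub_add_cancel] at h
  rw [ZMod.val_natCast_of_lt hcn] at h
  omega

theorem parity_add_one (hn2 : 2 ∣ n) (hn1 : 1 < n) (u : ZMod n) :
    (u + 1).val % 2 = (u.val + 1) % 2 := by
  haveI : Fact (1 < n) := ⟨hn1⟩
  have h := val_add_parity hn2 u 1
  rwa [ZMod.val_one] at h

theorem walk2_up (hn2 : 2 ∣ n) (hn1 : 1 < n) (hcn : c < n) (u : ZMod n) :
    hasWalk (crmStep n c) 2 u (u + c + 1) := by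
  rcases Nat.mod_two_eq_zero_or_one u.val with hu | hu
  · refine ⟨u + 1, step_arc u, u + 1 + c, step_up ?_, show _ = _ by ring⟩
    rw [parity_add_one hn2 hn1]
    omega
  · exact ⟨u + c, step_up hu, u + c + 1, step_arc _, rfl⟩

theorem walk2_down (hn2 : 2 ∣ n) (hn1 : 1 < n) (hcn : c < n) (hco : c % 2 = 1) (u : ZMod n) :
    hasWalk (crmStep n c) 2 u (u + 1 - c) := by
  rcases Nat.mod_two_eq_zero_or_one u.val with hu | hu
  · exact ⟨u - c, step_down hn2 hcn hco hu, u - c + 1, step_arc _, show _ = _ by ring⟩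
  · refine ⟨u + 1, step_arc u, u + 1 - c, step_down hn2 hcn hco ?_, rfl⟩
    rw [parity_add_one hn2 hn1]
    omega

theorem walk_straight : ∀ (s : ℕ) (u : ZMod n), hasWalk (crmStep n c) s u (u + (s : ZMod n))
  | 0, u => by simp [hasWalk]
  | s + 1, u => by
    have : s + 1 = 1 + s := by omega
    rw [this]
    refine hasWalk_trans (d₁ := 1) ⟨u + 1, step_arc u, rfl⟩ ?_
    have h := walk_straight s (u + 1)
    have he : u + 1 + (s : ZMod n) = u + ((1 + s : ℕ) : ZMod n) := by push_cast; ring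
    rwa [he] at h

theorem walk_iter_up (hn2 : 2 ∣ n) (hn1 : 1 < n) (hcn : c < n) :
    ∀ (a : ℕ) (u : ZMod n), hasWalk (crmStep n c) (2 * a) u (u + (a : ZMod n) * (c + 1))
  | 0, u => by simp [hasWalk]
  | a + 1, u => by
    have h2 : 2 * (a + 1) = 2 + 2 * a := by omega
    rw [h2]
    refine hasWalk_trans (walk2_up hn2 hn1 hcn u) ?_
    have h := walk_iter_up hn2 hn1 hcn a (u + c + 1)
    have he : u + c + 1 + (a : ZMod n) * (c + 1) = u + ((a : ℕ) + 1 : ℕ) * (c + 1) := by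
      push_cast; ring
    rwa [he] at h

theorem walk_iter_down (hn2 : 2 ∣ n) (hn1 : 1 < n) (hcn : c < n) (hco : c % 2 = 1) :
    ∀ (b : ℕ) (u : ZMod n), hasWalk (crmStep n c) (2 * b) u (u + (b : ZMod n) * (1 - c))
  | 0, u => by simp [hasWalk]
  | b + 1, u => by
    have h2 : 2 * (b + 1) = 2 + 2 * b := by omega
    rw [h2]
    refine hasWalk_trans (walk2_down hn2 hn1 hcn hco u) ?_
    have h := walk_iter_down hn2 hn1 hcn hco b (u + 1 - c)
    have he : u + 1 - c + (b : ZMod n) * (1 - c) = u + ((b : ℕ) + 1 : ℕ) * (1 - c) := by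
      push_cast; ring
    rwa [he] at h

end general

end CRMaux

namespace CRMaux

section char

variable {n c : ℕ} [NeZero n]

theorem walkChar (hn2 : 2 ∣ n) (hn1 : 1 < n) (hcn : c < n) (hco : c % 2 = 1) :
    ∀ (d : ℕ) (u v : ZMod n), hasWalk (crmStep n c) d u v →
      ∃ p q : ℕ, p + q ≤ d ∧ 2 * p ≤ d + u.val % 2 ∧ 2 * q ≤ d + 1 - u.val % 2 ∧
        v = u + ((d - p - q : ℕ) : ZMod n) + ((p : ZMod n) - (q : ZMod n)) * (c : ZMod n) := by
  intro d
  induction d with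
  | zero =>
    intro u v h
    cases h
    exact ⟨0, 0, by omega, by omega, by omega, by push_cast; ring⟩
  | succ d ih =>
    intro u v h
    obtain ⟨w, hst, hw⟩ := h
    rcases hst with hedge | harc
    · rcases hedge with ⟨hu, hwe⟩ | ⟨hwodd, hue⟩
      · -- u odd, w = u + c
        subst hwe
        have hpar : (u + (c : ZMod n)).val % 2 = 0 := by
          have h := val_add_parity hn2 u (c : ZMod n)
          rw [ZMod.val_natCast_of_lt hcn] at h
          omega
        obtain ⟨p, q, h1, h2, h3, h4⟩ := ih _ v hw
        rw [hpar] at h2 h3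
        refine ⟨p + 1, q, by omega, by omega, by omega, ?_⟩
        rw [h4]
        have hd : d - p - q = (d + 1) - (p + 1) - q := by omega
        rw [← hd]
        push_cast
        ring
      · -- w odd, u = w + c  (so u even, w = u - c)
        have hwu : w = u - (c : ZMod n) := by rw [hue]; ring
        have hpar : u.val % 2 = 0 := by
          rw [hue]
          have h := val_add_parity hn2 w (c : ZMod n)
          rw [ZMod.val_natCast_of_lt hcn] at h
          omega
        obtain ⟨p, q, h1, h2, h3, h4⟩ := ih _ v hw
        rw [hwodd] at h2 h3
        refine ⟨p, q + 1, by omega, by omega, by omega, ?_⟩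
        rw [h4, hwu]
        have hd : d - p - q = (d + 1) - p - (q + 1) := by omega
        rw [← hd]
        push_cast
        ring
    · -- arc : w = u + 1
      rw [crmArc] at harc
      subst harc
      have hpar : (u + 1).val % 2 = (u.val + 1) % 2 := parity_add_one hn2 hn1 u
      obtain ⟨p, q, h1, h2, h3, h4⟩ := ih _ v hw
      refine ⟨p, q, by omega, by omega, by omega, ?_⟩
      rw [h4]
      have hd : (d + 1) - p - q = (d - p - q) + 1 := by omega
      rw [hd]
      push_cast
      ring

end char

end CRMaux

namespace CRMaux

theorem cover {T : ℤ} (hT : 1 ≤ T) (r : ℤ) (hr0 : 0 ≤ r) (hr : r < 32*T^2 - 24*T + 8)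
    (hx : r ≠ 16*T^2 - 8*T + 3) :
    ∃ m e : ℤ, -e ≤ m ∧ m ≤ e ∧ e + m ≤ 8*T-2 ∧ e - m ≤ 8*T-2 ∧
      (32*T^2-24*T+8) ∣ m*(8*T^2-8*T+3) + e - r := by
  obtain ⟨q, s, hqs, hs0, hsP, hq0⟩ :
      ∃ q s : ℤ, (8*T-4) * q + s = r ∧ 0 ≤ s ∧ s < 8*T-4 ∧ 0 ≤ q :=
    ⟨r / (8*T-4), r % (8*T-4), Int.mul_ediv_add_emod r _,
      Int.emod_nonneg r (by omega), Int.emod_lt_of_pos r (by omega),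
      Int.ediv_nonneg hr0 (by omega)⟩
  have hq4 : q ≤ 4*T-1 := by
    by_contra hcon
    push_neg at hcon
    have h1 : (8*T-4)*(4*T) ≤ (8*T-4)*q := mul_le_mul_of_nonneg_left (by omega) (by omega)
    nlinarith

  by_cases hz0 : q = 0
  ·
    by_cases k0_0 : -(s) ≤ (-4*q) ∧ (-4*q) ≤ (s) ∧ (s) + (-4*q) ≤ 8*T-2 ∧ (s) - (-4*q) ≤ 8*T-2
    · exact ⟨-4*q, s, k0_0.1, k0_0.2.1, k0_0.2.2.1, k0_0.2.2.2, ⟨-q, by linear_combination hqs⟩⟩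
    exfalso
    omega

  by_cases hz1 : q ≤ T-1
  ·
    by_cases k1_0 : -(s-(4*T-1)) ≤ (4*T-3-4*q) ∧ (4*T-3-4*q) ≤ (s-(4*T-1)) ∧ (s-(4*T-1)) + (4*T-3-4*q) ≤ 8*T-2 ∧ (s-(4*T-1)) - (4*T-3-4*q) ≤ 8*T-2
    · exact ⟨4*T-3-4*q, s-(4*T-1), k1_0.1, k1_0.2.1, k1_0.2.2.1, k1_0.2.2.2, ⟨T-1-q, by linear_combination hqs⟩⟩
    by_cases k1_1 : -(s) ≤ (-4*q) ∧ (-4*q) ≤ (s) ∧ (s) + (-4*q) ≤ 8*T-2 ∧ (s) - (-4*q) ≤ 8*T-2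
    · exact ⟨-4*q, s, k1_1.1, k1_1.2.1, k1_1.2.2.1, k1_1.2.2.2, ⟨-q, by linear_combination hqs⟩⟩
    by_cases k1_2 : -(s+4*T-3) ≤ (4*T+1-4*q) ∧ (4*T+1-4*q) ≤ (s+4*T-3) ∧ (s+4*T-3) + (4*T+1-4*q) ≤ 8*T-2 ∧ (s+4*T-3) - (4*T+1-4*q) ≤ 8*T-2
    · exact ⟨4*T+1-4*q, s+4*T-3, k1_2.1, k1_2.2.1, k1_2.2.2.1, k1_2.2.2.2, ⟨T-q, by linear_combination hqs⟩⟩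
    exfalso
    omega

  by_cases hz2 : q = T
  ·
    by_cases k2_0 : -(s-(4*T-1)) ≤ (4*T-3-4*q) ∧ (4*T-3-4*q) ≤ (s-(4*T-1)) ∧ (s-(4*T-1)) + (4*T-3-4*q) ≤ 8*T-2 ∧ (s-(4*T-1)) - (4*T-3-4*q) ≤ 8*T-2
    · exact ⟨4*T-3-4*q, s-(4*T-1), k2_0.1, k2_0.2.1, k2_0.2.2.1, k2_0.2.2.2, ⟨T-1-q, by linear_combination hqs⟩⟩
    by_cases k2_1 : -(s-2) ≤ (8*T-2-4*q) ∧ (8*T-2-4*q) ≤ (s-2) ∧ (s-2) + (8*T-2-4*q) ≤ 8*T-2 ∧ (s-2) - (8*T-2-4*q) ≤ 8*T-2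
    · exact ⟨8*T-2-4*q, s-2, k2_1.1, k2_1.2.1, k2_1.2.2.1, k2_1.2.2.2, ⟨2*T-1-q, by linear_combination hqs⟩⟩
    by_cases k2_2 : -(s+4*T-3) ≤ (4*T+1-4*q) ∧ (4*T+1-4*q) ≤ (s+4*T-3) ∧ (s+4*T-3) + (4*T+1-4*q) ≤ 8*T-2 ∧ (s+4*T-3) - (4*T+1-4*q) ≤ 8*T-2
    · exact ⟨4*T+1-4*q, s+4*T-3, k2_2.1, k2_2.2.1, k2_2.2.2.1, k2_2.2.2.2, ⟨T-q, by linear_combination hqs⟩⟩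
    exfalso
    omega

  by_cases hz3 : q ≤ 2*T-1
  ·
    by_cases k3_0 : -(s-(4*T-1)) ≤ (4*T-3-4*q) ∧ (4*T-3-4*q) ≤ (s-(4*T-1)) ∧ (s-(4*T-1)) + (4*T-3-4*q) ≤ 8*T-2 ∧ (s-(4*T-1)) - (4*T-3-4*q) ≤ 8*T-2
    · exact ⟨4*T-3-4*q, s-(4*T-1), k3_0.1, k3_0.2.1, k3_0.2.2.1, k3_0.2.2.2, ⟨T-1-q, by linear_combination hqs⟩⟩
    by_cases k3_1 : -(s-2) ≤ (8*T-2-4*q) ∧ (8*T-2-4*q) ≤ (s-2) ∧ (s-2) + (8*T-2-4*q) ≤ 8*T-2 ∧ (s-2) - (8*T-2-4*q) ≤ 8*T-2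
    · exact ⟨8*T-2-4*q, s-2, k3_1.1, k3_1.2.1, k3_1.2.2.1, k3_1.2.2.2, ⟨2*T-1-q, by linear_combination hqs⟩⟩
    by_cases k3_2 : -(s+4*T-3) ≤ (4*T+1-4*q) ∧ (4*T+1-4*q) ≤ (s+4*T-3) ∧ (s+4*T-3) + (4*T+1-4*q) ≤ 8*T-2 ∧ (s+4*T-3) - (4*T+1-4*q) ≤ 8*T-2
    · exact ⟨4*T+1-4*q, s+4*T-3, k3_2.1, k3_2.2.1, k3_2.2.2.1, k3_2.2.2.2, ⟨T-q, by linear_combination hqs⟩⟩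
    exfalso
    omega

  by_cases hz4 : q = 2*T
  ·
    by_cases k4_0 : -(s-2) ≤ (8*T-2-4*q) ∧ (8*T-2-4*q) ≤ (s-2) ∧ (s-2) + (8*T-2-4*q) ≤ 8*T-2 ∧ (s-2) - (8*T-2-4*q) ≤ 8*T-2
    · exact ⟨8*T-2-4*q, s-2, k4_0.1, k4_0.2.1, k4_0.2.2.1, k4_0.2.2.2, ⟨2*T-1-q, by linear_combination hqs⟩⟩
    by_cases k4_1 : -(s+4*T-3) ≤ (4*T+1-4*q) ∧ (4*T+1-4*q) ≤ (s+4*T-3) ∧ (s+4*T-3) + (4*T+1-4*q) ≤ 8*T-2 ∧ (s+4*T-3) - (4*T+1-4*q) ≤ 8*T-2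
    · exact ⟨4*T+1-4*q, s+4*T-3, k4_1.1, k4_1.2.1, k4_1.2.2.1, k4_1.2.2.2, ⟨T-q, by linear_combination hqs⟩⟩
    by_cases k4_2 : -(s+8*T-6) ≤ (8*T+2-4*q) ∧ (8*T+2-4*q) ≤ (s+8*T-6) ∧ (s+8*T-6) + (8*T+2-4*q) ≤ 8*T-2 ∧ (s+8*T-6) - (8*T+2-4*q) ≤ 8*T-2
    · exact ⟨8*T+2-4*q, s+8*T-6, k4_2.1, k4_2.2.1, k4_2.2.2.1, k4_2.2.2.2, ⟨2*T-q, by linear_combination hqs⟩⟩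
    exfalso
    apply hx
    have hq2 : q = 2*T ∧ s = 3 := by omega
    rw [← hqs, hq2.1, hq2.2]
    ring

  by_cases hz5 : q ≤ 3*T-1
  ·
    by_cases k5_0 : -(s-(4*T+1)) ≤ (12*T-5-4*q) ∧ (12*T-5-4*q) ≤ (s-(4*T+1)) ∧ (s-(4*T+1)) + (12*T-5-4*q) ≤ 8*T-2 ∧ (s-(4*T+1)) - (12*T-5-4*q) ≤ 8*T-2
    · exact ⟨12*T-5-4*q, s-(4*T+1), k5_0.1, k5_0.2.1, k5_0.2.2.1, k5_0.2.2.2, ⟨3*T-2-q, by linear_combination hqs⟩⟩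
    by_cases k5_1 : -(s-2) ≤ (8*T-2-4*q) ∧ (8*T-2-4*q) ≤ (s-2) ∧ (s-2) + (8*T-2-4*q) ≤ 8*T-2 ∧ (s-2) - (8*T-2-4*q) ≤ 8*T-2
    · exact ⟨8*T-2-4*q, s-2, k5_1.1, k5_1.2.1, k5_1.2.2.1, k5_1.2.2.2, ⟨2*T-1-q, by linear_combination hqs⟩⟩
    by_cases k5_2 : -(s+4*T-5) ≤ (12*T-1-4*q) ∧ (12*T-1-4*q) ≤ (s+4*T-5) ∧ (s+4*T-5) + (12*T-1-4*q) ≤ 8*T-2 ∧ (s+4*T-5) - (12*T-1-4*q) ≤ 8*T-2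
    · exact ⟨12*T-1-4*q, s+4*T-5, k5_2.1, k5_2.2.1, k5_2.2.2.1, k5_2.2.2.2, ⟨3*T-1-q, by linear_combination hqs⟩⟩
    exfalso
    omega

  by_cases hz6 : q = 3*T
  ·
    by_cases k6_0 : -(s-(4*T+1)) ≤ (12*T-5-4*q) ∧ (12*T-5-4*q) ≤ (s-(4*T+1)) ∧ (s-(4*T+1)) + (12*T-5-4*q) ≤ 8*T-2 ∧ (s-(4*T+1)) - (12*T-5-4*q) ≤ 8*T-2
    · exact ⟨12*T-5-4*q, s-(4*T+1), k6_0.1, k6_0.2.1, k6_0.2.2.1, k6_0.2.2.2, ⟨3*T-2-q, by linear_combination hqs⟩⟩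
    by_cases k6_1 : -(s-4) ≤ (16*T-4-4*q) ∧ (16*T-4-4*q) ≤ (s-4) ∧ (s-4) + (16*T-4-4*q) ≤ 8*T-2 ∧ (s-4) - (16*T-4-4*q) ≤ 8*T-2
    · exact ⟨16*T-4-4*q, s-4, k6_1.1, k6_1.2.1, k6_1.2.2.1, k6_1.2.2.2, ⟨4*T-2-q, by linear_combination hqs⟩⟩
    by_cases k6_2 : -(s+4*T-5) ≤ (12*T-1-4*q) ∧ (12*T-1-4*q) ≤ (s+4*T-5) ∧ (s+4*T-5) + (12*T-1-4*q) ≤ 8*T-2 ∧ (s+4*T-5) - (12*T-1-4*q) ≤ 8*T-2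
    · exact ⟨12*T-1-4*q, s+4*T-5, k6_2.1, k6_2.2.1, k6_2.2.2.1, k6_2.2.2.2, ⟨3*T-1-q, by linear_combination hqs⟩⟩
    by_cases k6_3 : -(s+8*T-6) ≤ (8*T+2-4*q) ∧ (8*T+2-4*q) ≤ (s+8*T-6) ∧ (s+8*T-6) + (8*T+2-4*q) ≤ 8*T-2 ∧ (s+8*T-6) - (8*T+2-4*q) ≤ 8*T-2
    · exact ⟨8*T+2-4*q, s+8*T-6, k6_3.1, k6_3.2.1, k6_3.2.2.1, k6_3.2.2.2, ⟨2*T-q, by linear_combination hqs⟩⟩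
    exfalso
    omega

  by_cases hz7 : q ≤ 4*T-2
  ·
    by_cases k7_0 : -(s-(4*T+1)) ≤ (12*T-5-4*q) ∧ (12*T-5-4*q) ≤ (s-(4*T+1)) ∧ (s-(4*T+1)) + (12*T-5-4*q) ≤ 8*T-2 ∧ (s-(4*T+1)) - (12*T-5-4*q) ≤ 8*T-2
    · exact ⟨12*T-5-4*q, s-(4*T+1), k7_0.1, k7_0.2.1, k7_0.2.2.1, k7_0.2.2.2, ⟨3*T-2-q, by linear_combination hqs⟩⟩
    by_cases k7_1 : -(s-4) ≤ (16*T-4-4*q) ∧ (16*T-4-4*q) ≤ (s-4) ∧ (s-4) + (16*T-4-4*q) ≤ 8*T-2 ∧ (s-4) - (16*T-4-4*q) ≤ 8*T-2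
    · exact ⟨16*T-4-4*q, s-4, k7_1.1, k7_1.2.1, k7_1.2.2.1, k7_1.2.2.2, ⟨4*T-2-q, by linear_combination hqs⟩⟩
    by_cases k7_2 : -(s+4*T-5) ≤ (12*T-1-4*q) ∧ (12*T-1-4*q) ≤ (s+4*T-5) ∧ (s+4*T-5) + (12*T-1-4*q) ≤ 8*T-2 ∧ (s+4*T-5) - (12*T-1-4*q) ≤ 8*T-2
    · exact ⟨12*T-1-4*q, s+4*T-5, k7_2.1, k7_2.2.1, k7_2.2.2.1, k7_2.2.2.2, ⟨3*T-1-q, by linear_combination hqs⟩⟩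
    exfalso
    omega

  have hq' : q = 4*T-1 := by omega
  have hprod : (8*T-4)*q = 32*T^2-24*T+4 := by rw [hq']; ring
  by_cases k8_0 : -(s+4*T-5) ≤ (12*T-1-4*q) ∧ (12*T-1-4*q) ≤ (s+4*T-5) ∧ (s+4*T-5) + (12*T-1-4*q) ≤ 8*T-2 ∧ (s+4*T-5) - (12*T-1-4*q) ≤ 8*T-2
  · exact ⟨12*T-1-4*q, s+4*T-5, k8_0.1, k8_0.2.1, k8_0.2.2.1, k8_0.2.2.2, ⟨3*T-1-q, by linear_combination hqs⟩⟩
  by_cases k8_1 : -(s+8*T-8) ≤ (16*T-4*q) ∧ (16*T-4*q) ≤ (s+8*T-8) ∧ (s+8*T-8) + (16*T-4*q) ≤ 8*T-2 ∧ (s+8*T-8) - (16*T-4*q) ≤ 8*T-2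
  · exact ⟨16*T-4*q, s+8*T-8, k8_1.1, k8_1.2.1, k8_1.2.2.1, k8_1.2.2.2, ⟨4*T-1-q, by linear_combination hqs⟩⟩
  exfalso
  omega


end CRMaux

namespace CRMaux

section reach

variable {n c : ℕ} [NeZero n]

theorem reach (hn2 : 2 ∣ n) (hn1 : 1 < n) (hcn : c < n) (hco : c % 2 = 1)
    (u v : ZMod n) (K : ℕ) (m e : ℤ) (h1 : -e ≤ m) (h2 : m ≤ e)
    (h3 : e + m ≤ (K : ℤ)) (h4 : e - m ≤ (K : ℤ))
    (hdvd : (n : ℤ) ∣ m * (c : ℤ) + e - ((v - u).val : ℤ)) :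
    ∃ d ≤ K, hasWalk (crmStep n c) d u v := by
  have hval : (((v - u).val : ℕ) : ZMod n) = v - u := ZMod.natCast_zmod_val _
  have hzero : ((m * (c : ℤ) + e - ((v - u).val : ℤ) : ℤ) : ZMod n) = 0 :=
    (ZMod.intCast_zmod_eq_zero_iff_dvd _ _).mpr hdvd
  push_cast at hzero
  rw [hval] at hzero
  rcases le_or_gt 0 m with hm | hm
  · refine ⟨2 * m.toNat + (e - m).toNat, by omega, ?_⟩
    have ha : (m.toNat : ℤ) = m := Int.toNat_of_nonneg hm
    have hs : ((e - m).toNat : ℤ) = e - m := Int.toNat_of_nonneg (by omega)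
    have hw := hasWalk_trans (walk_iter_up hn2 hn1 hcn m.toNat u)
      (walk_straight (e - m).toNat (u + (m.toNat : ZMod n) * ((c : ZMod n) + 1)))
    have he : u + (m.toNat : ZMod n) * ((c : ZMod n) + 1) + ((e - m).toNat : ZMod n) = v := by
      have c1 : (m.toNat : ZMod n) = ((m : ℤ) : ZMod n) := by
        conv_rhs => rw [← ha]
        exact (Int.cast_natCast _).symm
      have c2 : ((e - m).toNat : ZMod n) = ((e - m : ℤ) : ZMod n) := by
        conv_rhs => rw [← hs]
        exact (Int.cast_natCast _).symm
      rw [c1, c2]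
      push_cast
      linear_combination hzero
    rwa [he] at hw
  · refine ⟨2 * (-m).toNat + (e + m).toNat, by omega, ?_⟩
    have ha : ((-m).toNat : ℤ) = -m := Int.toNat_of_nonneg (by omega)
    have hs : ((e + m).toNat : ℤ) = e + m := Int.toNat_of_nonneg (by omega)
    have hw := hasWalk_trans (walk_iter_down hn2 hn1 hcn hco (-m).toNat u)
      (walk_straight (e + m).toNat (u + ((-m).toNat : ZMod n) * (1 - (c : ZMod n))))
    have he : u + ((-m).toNat : ZMod n) * (1 - (c : ZMod n)) + ((e + m).toNat : ZMod n) = v := by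
      have c1 : ((-m).toNat : ZMod n) = ((-m : ℤ) : ZMod n) := by
        conv_rhs => rw [← ha]
        exact (Int.cast_natCast _).symm
      have c2 : ((e + m).toNat : ZMod n) = ((e + m : ℤ) : ZMod n) := by
        conv_rhs => rw [← hs]
        exact (Int.cast_natCast _).symm
      rw [c1, c2]
      push_cast
      linear_combination hzero
    rwa [he] at hw

end reach

theorem lower_core {T : ℤ} (hT : 1 ≤ T) (S pz qz dz lam : ℤ) (hS : 0 ≤ S)
    (hsum : S + pz + qz = dz) (hp0 : 0 ≤ pz) (hq0 : 0 ≤ qz)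
    (hp : 2 * pz ≤ dz) (hq : 2 * qz ≤ dz + 1) (hd : dz ≤ 8 * T - 3)
    (hlam : S + (pz - qz + 2) * (8 * T ^ 2 - 8 * T + 3) = (32 * T ^ 2 - 24 * T + 8) * lam) :
    False := by
  obtain ⟨j, hj⟩ : ∃ j : ℤ, j = pz - qz + 2 := ⟨_, rfl⟩
  rw [← hj] at hlam
  have hmu_eq : 4 * S - j * (8 * T - 4) = (4 * lam - j) * (32 * T ^ 2 - 24 * T + 8) := by
    linear_combination 4 * hlam
  obtain ⟨nu, hnu⟩ : ∃ nu : ℤ, nu = 4 * lam - j := ⟨_, rfl⟩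
  rw [← hnu] at hmu_eq
  have hjlo : 3 - 4 * T ≤ j := by omega
  have hjhi : j ≤ 4 * T := by omega
  have hplo : (3 - 4 * T) * (8 * T - 4) ≤ j * (8 * T - 4) :=
    mul_le_mul_of_nonneg_right hjlo (by omega)
  have hphi : j * (8 * T - 4) ≤ (4 * T) * (8 * T - 4) :=
    mul_le_mul_of_nonneg_right hjhi (by omega)
  have he1 : (3 - 4 * T) * (8 * T - 4) = -32 * T ^ 2 + 40 * T - 12 := by ring
  have he2 : (4 * T) * (8 * T - 4) = 32 * T ^ 2 - 16 * T := by ring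
  have hNpos : (0 : ℤ) < 32 * T ^ 2 - 24 * T + 8 := by nlinarith
  have hmu1 : nu < 2 := by
    have h := hmu_eq
    have hlt : nu * (32 * T ^ 2 - 24 * T + 8) < 2 * (32 * T ^ 2 - 24 * T + 8) := by nlinarith
    exact lt_of_mul_lt_mul_right (by linarith) hNpos.le
  have hmu2 : -1 ≤ nu := by
    have hlt : (-2) * (32 * T ^ 2 - 24 * T + 8) < nu * (32 * T ^ 2 - 24 * T + 8) := by nlinarith
    have := lt_of_mul_lt_mul_right hlt hNpos.le
    omega
  have hcases : nu = -1 ∨ nu = 0 ∨ nu = 1 := by omega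
  rcases hcases with h | h | h
  · -- nu = -1 : 4S = -N + jP, forces j ∈ {4T-1, 4T}, but j ≡ 1 (mod 4): contradiction
    rw [h] at hmu_eq
    have hjlo2 : 4 * T - 1 ≤ j := by
      by_contra hcon
      push_neg at hcon
      have : j * (8 * T - 4) ≤ (4 * T - 2) * (8 * T - 4) :=
        mul_le_mul_of_nonneg_right (by omega) (by omega)
      have hexp : (4 * T - 2) * (8 * T - 4) = 32 * T ^ 2 - 32 * T + 8 := by ring
      nlinarith
    omega
  · -- nu = 0 : j = 4 lam, 4S = jP
    rw [h] at hmu_eq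
    have hjlam : j = 4 * lam := by omega
    rw [hjlam] at hmu_eq
    have hl0 : 0 ≤ lam := by
      by_contra hcon
      push_neg at hcon
      have : 4 * lam * (8 * T - 4) ≤ (-4) * (8 * T - 4) :=
        mul_le_mul_of_nonneg_right (by omega) (by omega)
      nlinarith
    have hl1 : lam ≤ 1 := by
      by_contra hcon
      push_neg at hcon
      have : 8 * (8 * T - 4) ≤ 4 * lam * (8 * T - 4) :=
        mul_le_mul_of_nonneg_right (by omega) (by omega)
      nlinarith
    have : lam = 0 ∨ lam = 1 := by omega
    rcases this with h2 | h2 <;> rw [h2] at hmu_eq hjlam <;> omega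
  · -- nu = 1 : 4S = N + jP, forces lam = 1 - T
    rw [h] at hmu_eq
    have hjlam : j = 4 * lam - 1 := by omega
    rw [hjlam] at hmu_eq
    have hlup : lam ≤ 1 - T := by
      by_contra hcon
      push_neg at hcon
      have : (7 - 4 * T) * (8 * T - 4) ≤ (4 * lam - 1) * (8 * T - 4) :=
        mul_le_mul_of_nonneg_right (by omega) (by omega)
      have hexp : (7 - 4 * T) * (8 * T - 4) = -32 * T ^ 2 + 72 * T - 28 := by ring
      nlinarith
    have hldown : 1 - T ≤ lam := by
      by_contra hcon
      push_neg at hcon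
      have : (4 * lam - 1) * (8 * T - 4) ≤ (-4 * T - 1) * (8 * T - 4) :=
        mul_le_mul_of_nonneg_right (by omega) (by omega)
      have hexp : (-4 * T - 1) * (8 * T - 4) = -32 * T ^ 2 + 8 * T + 4 := by ring
      nlinarith
    have hlval : lam = 1 - T := by omega
    rw [hlval] at hmu_eq hjlam
    have hexp : (4 * (1 - T) - 1) * (8 * T - 4) = -32 * T ^ 2 + 40 * T - 12 := by ring
    rw [hexp] at hmu_eq
    -- 4S = N + (3-4T)P = 16T - 4, S = 4T - 1
    have hSval : S = 4 * T - 1 := by linarith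
    omega

end CRMaux

open CRMaux

/-- For every $t ≥ 1$, with $k = 8t-2$, the chordal ring mixed graph $CRM(n,c)$ with
$n = k(k/2-1)+4 = 32t^2-24t+8$ and $c = 8t^2-8t+3 = (k+2)^2/8-k+1$ has diameter
exactly $k$. -/
theorem CRM_diameter_8t_sub_2 (t : ℕ) (ht : 1 ≤ t) :
    32 * t ^ 2 - 24 * t + 8 = (8 * t - 2) * ((8 * t - 2) / 2 - 1) + 4 ∧
    8 * t ^ 2 - 8 * t + 3 = ((8 * t - 2) + 2) ^ 2 / 8 - (8 * t - 2) + 1 ∧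
    (∀ u v : ZMod (32 * t ^ 2 - 24 * t + 8),
      ∃ d ≤ 8 * t - 2,
        hasWalk (crmStep (32 * t ^ 2 - 24 * t + 8) (8 * t ^ 2 - 8 * t + 3)) d u v) ∧
    (∃ u v : ZMod (32 * t ^ 2 - 24 * t + 8),
      ∀ d < 8 * t - 2,
        ¬ hasWalk (crmStep (32 * t ^ 2 - 24 * t + 8) (8 * t ^ 2 - 8 * t + 3)) d u v) := by
  have hsq : 8 * t ≤ 8 * t ^ 2 := by nlinarith
  have h24 : 24 * t ≤ 32 * t ^ 2 := by nlinarith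
  have h16 : 16 * t ≤ 24 * t ^ 2 := by nlinarith
  have h16b : 16 * t + 5 ≤ 24 * t ^ 2 + 10 := by omega
  haveI : NeZero (32 * t ^ 2 - 24 * t + 8) := ⟨by omega⟩
  have hn2 : 2 ∣ (32 * t ^ 2 - 24 * t + 8) := by omega
  have hn1 : 1 < 32 * t ^ 2 - 24 * t + 8 := by omega
  have hcn : 8 * t ^ 2 - 8 * t + 3 < 32 * t ^ 2 - 24 * t + 8 := by omega
  have hco : (8 * t ^ 2 - 8 * t + 3) % 2 = 1 := by omega
  have hNZ : ((32 * t ^ 2 - 24 * t + 8 : ℕ) : ℤ) = 32 * (t : ℤ) ^ 2 - 24 * (t : ℤ) + 8 := by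
    rw [Nat.cast_add, Nat.cast_sub h24]; push_cast; ring
  have hCZ : ((8 * t ^ 2 - 8 * t + 3 : ℕ) : ℤ) = 8 * (t : ℤ) ^ 2 - 8 * (t : ℤ) + 3 := by
    rw [Nat.cast_add, Nat.cast_sub hsq]; push_cast; ring
  have hT : 1 ≤ (t : ℤ) := by exact_mod_cast ht
  refine ⟨?_, ?_, ?_, ?_⟩
  · -- arithmetic identity 1
    have h1 : (8 * t - 2) / 2 - 1 = 4 * t - 2 := by omega
    rw [h1]
    zify [show 2 ≤ 8 * t by omega, show 2 ≤ 4 * t by omega, h24]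
    ring
  · -- arithmetic identity 2
    have h1 : 8 * t - 2 + 2 = 8 * t := by omega
    rw [h1]
    have h2 : (8 * t) ^ 2 = 8 * (8 * t ^ 2) := by ring
    rw [h2, Nat.mul_div_cancel_left _ (by norm_num : 0 < 8)]
    omega
  · -- upper bound
    intro u v
    by_cases hexc : (((v - u).val : ℕ) : ℤ) = 16 * (t : ℤ) ^ 2 - 8 * (t : ℤ) + 3
    · -- exceptional residue 1 - 2c
      have hval : (((v - u).val : ℕ) : ZMod (32 * t ^ 2 - 24 * t + 8)) = v - u :=
        ZMod.natCast_zmod_val _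
      have hveq : v - u =
          1 - 2 * ((8 * t ^ 2 - 8 * t + 3 : ℕ) : ZMod (32 * t ^ 2 - 24 * t + 8)) := by
        rw [← hval]
        have hstep : (((v - u).val : ℕ) : ℤ) = ((32 * t ^ 2 - 24 * t + 8 : ℕ) : ℤ) + 1
            - 2 * ((8 * t ^ 2 - 8 * t + 3 : ℕ) : ℤ) := by
          rw [hexc, hNZ, hCZ]; ring
        calc (((v - u).val : ℕ) : ZMod (32 * t ^ 2 - 24 * t + 8))
            = ((((v - u).val : ℕ) : ℤ) : ZMod (32 * t ^ 2 - 24 * t + 8)) :=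
              (Int.cast_natCast _).symm
          _ = ((((32 * t ^ 2 - 24 * t + 8 : ℕ) : ℤ) + 1
                - 2 * ((8 * t ^ 2 - 8 * t + 3 : ℕ) : ℤ) : ℤ) :
                  ZMod (32 * t ^ 2 - 24 * t + 8)) := by rw [hstep]
          _ = 1 - 2 * ((8 * t ^ 2 - 8 * t + 3 : ℕ) : ZMod (32 * t ^ 2 - 24 * t + 8)) := by
              simp only [Int.cast_add, Int.cast_sub, Int.cast_mul, Int.cast_natCast,
                Int.cast_one, Int.cast_ofNat]
              rw [ZMod.natCast_self]
              ring
      rcases Nat.mod_two_eq_zero_or_one u.val with hu | hu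
      · -- u even : chord down, arc, chord down : 3 steps
        have p1 : (u - ((8 * t ^ 2 - 8 * t + 3 : ℕ) :
            ZMod (32 * t ^ 2 - 24 * t + 8))).val % 2 = 1 := by
          have h := val_add_parity hn2
            (u - ((8 * t ^ 2 - 8 * t + 3 : ℕ) : ZMod (32 * t ^ 2 - 24 * t + 8)))
            ((8 * t ^ 2 - 8 * t + 3 : ℕ) : ZMod (32 * t ^ 2 - 24 * t + 8))
          rw [sub_add_cancel, ZMod.val_natCast_of_lt hcn] at h
          omega
        have p2 : (u - ((8 * t ^ 2 - 8 * t + 3 : ℕ) :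
            ZMod (32 * t ^ 2 - 24 * t + 8)) + 1).val % 2 = 0 := by
          rw [parity_add_one hn2 hn1]
          omega
        refine ⟨3, by omega, ?_⟩
        refine ⟨u - (8 * t ^ 2 - 8 * t + 3 : ℕ), step_down hn2 hcn hco hu,
          u - (8 * t ^ 2 - 8 * t + 3 : ℕ) + 1, step_arc _,
          u - (8 * t ^ 2 - 8 * t + 3 : ℕ) + 1 - (8 * t ^ 2 - 8 * t + 3 : ℕ),
          step_down hn2 hcn hco p2, ?_⟩
        show _ = v
        linear_combination -hveq
      · -- u odd : chord up then 4t-2 blocks of (c+1) : 8t-3 steps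
        refine ⟨1 + 2 * (4 * t - 2), by omega, ?_⟩
        have hw := hasWalk_trans (d₁ := 1)
          (⟨u + (8 * t ^ 2 - 8 * t + 3 : ℕ), step_up hu, rfl⟩ :
            hasWalk (crmStep (32 * t ^ 2 - 24 * t + 8) (8 * t ^ 2 - 8 * t + 3)) 1 u _)
          (walk_iter_up hn2 hn1 hcn (4 * t - 2) (u + (8 * t ^ 2 - 8 * t + 3 : ℕ)))
        have hC0 : ((8 * t ^ 2 - 8 * t + 3 : ℕ) : ZMod (32 * t ^ 2 - 24 * t + 8)) =
            8 * (t : ZMod (32 * t ^ 2 - 24 * t + 8)) ^ 2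
            - 8 * (t : ZMod (32 * t ^ 2 - 24 * t + 8)) + 3 := by
          calc ((8 * t ^ 2 - 8 * t + 3 : ℕ) : ZMod (32 * t ^ 2 - 24 * t + 8))
              = (((8 * t ^ 2 - 8 * t + 3 : ℕ) : ℤ) : ZMod (32 * t ^ 2 - 24 * t + 8)) :=
                (Int.cast_natCast _).symm
            _ = ((8 * (t : ℤ) ^ 2 - 8 * (t : ℤ) + 3 : ℤ) :
                  ZMod (32 * t ^ 2 - 24 * t + 8)) := by rw [hCZ]
            _ = _ := by push_cast; ring
        have h32 : 32 * (t : ZMod (32 * t ^ 2 - 24 * t + 8)) ^ 2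
            - 24 * (t : ZMod (32 * t ^ 2 - 24 * t + 8)) + 8 = 0 := by
          calc 32 * (t : ZMod (32 * t ^ 2 - 24 * t + 8)) ^ 2
              - 24 * (t : ZMod (32 * t ^ 2 - 24 * t + 8)) + 8
              = ((32 * (t : ℤ) ^ 2 - 24 * (t : ℤ) + 8 : ℤ) :
                  ZMod (32 * t ^ 2 - 24 * t + 8)) := by push_cast; ring
            _ = (((32 * t ^ 2 - 24 * t + 8 : ℕ) : ℤ) :
                  ZMod (32 * t ^ 2 - 24 * t + 8)) := by rw [hNZ]
            _ = 0 := by rw [Int.cast_natCast, ZMod.natCast_self]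
        have hnu : ((4 * t - 2 : ℕ) : ZMod (32 * t ^ 2 - 24 * t + 8)) =
            4 * (t : ZMod (32 * t ^ 2 - 24 * t + 8)) - 2 := by
          rw [Nat.cast_sub (by omega)]; push_cast; ring
        have he : u + ((8 * t ^ 2 - 8 * t + 3 : ℕ) : ZMod (32 * t ^ 2 - 24 * t + 8))
            + ((4 * t - 2 : ℕ) : ZMod (32 * t ^ 2 - 24 * t + 8)) *
              (((8 * t ^ 2 - 8 * t + 3 : ℕ) : ZMod (32 * t ^ 2 - 24 * t + 8)) + 1) = v := by
          rw [hC0, hnu]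
          rw [hC0] at hveq
          linear_combination -hveq + (t : ZMod (32 * t ^ 2 - 24 * t + 8)) * h32
        rwa [he] at hw
    · -- generic residue : covering lemma
      obtain ⟨m, e, hme1, hme2, hme3, hme4, hdvd⟩ :=
        cover hT (((v - u).val : ℕ) : ℤ) (Int.natCast_nonneg _)
          (by rw [← hNZ]; exact_mod_cast ZMod.val_lt (v - u)) hexc
      have hdvd' : ((32 * t ^ 2 - 24 * t + 8 : ℕ) : ℤ) ∣
          m * ((8 * t ^ 2 - 8 * t + 3 : ℕ) : ℤ) + e - (((v - u).val : ℕ) : ℤ) := by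
        rw [hNZ, hCZ]; exact hdvd
      have hKZ : ((8 * t - 2 : ℕ) : ℤ) = 8 * (t : ℤ) - 2 := by omega
      exact reach hn2 hn1 hcn hco u v (8 * t - 2) m e hme1 hme2
        (by rw [hKZ]; exact hme3) (by rw [hKZ]; exact hme4) hdvd'
  · -- lower bound : vertex -2c is at distance 8t-2 from 0
    refine ⟨0, -(2 * ((8 * t ^ 2 - 8 * t + 3 : ℕ) : ZMod (32 * t ^ 2 - 24 * t + 8))), ?_⟩
    intro d hd hw
    obtain ⟨p, q, hpq, hp, hq, heq⟩ := walkChar hn2 hn1 hcn hco d 0 _ hw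
    rw [ZMod.val_zero] at hp hq
    have hz : ((((d - p - q : ℕ) : ℤ) + ((p : ℤ) - (q : ℤ) + 2) *
        ((8 * t ^ 2 - 8 * t + 3 : ℕ) : ℤ) : ℤ) : ZMod (32 * t ^ 2 - 24 * t + 8)) = 0 := by
      simp only [Int.cast_add, Int.cast_sub, Int.cast_mul, Int.cast_natCast,
        Int.cast_one, Int.cast_ofNat]
      linear_combination -heq
    have hdvd := (ZMod.intCast_zmod_eq_zero_iff_dvd _ _).mp hz
    rw [hNZ, hCZ] at hdvd
    obtain ⟨lam, hlam⟩ := hdvd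
    exact lower_core hT ((d - p - q : ℕ) : ℤ) (p : ℤ) (q : ℤ) (d : ℤ) lam
      (Int.natCast_nonneg _) (by omega)
      (Int.natCast_nonneg _) (Int.natCast_nonneg _)
      (by omega) (by omega) (by omega) hlam
end
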